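/- arXiv:2309.03375 — 9 statements merged into one kernel-verified Lean document; each statement's English description precedes it below -/
import Mathlib

section
/- Under the POD decomposition hypothesis, for every 1 ≤ r ≤ s the weighted data approximation error of the orthogonal POD projection satisfies the exact formula Σ_{j=1}^N γ_j ‖w^j − Π_r^X w^j‖_X² = Σ_{k=r+1}^s λ_k. -/
/-!
On each snapshot the projection error is the tail `∑_{k>r} √λ_k (f_k)_j φ_k` of the expansion of
`w^j`, because the head lies in `X_r` and the tail is orthogonal to it, and an orthogonal
decomposition along `X_r` is unique. By orthonormality of the `φ_k` its squared norm is
`∑_{k>r} λ_k (f_k)_j²`; summing with the weights `γ_j` and using `‖f_k‖_Γ = 1` leaves `∑_{k>r} λ_k`.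
-/

open Finset RealInnerProductSpace

/-- forward difference quotient -/
noncomputable def fdiff {Z : Type*} [AddCommGroup Z] [Module ℝ Z]
    (dt : ℝ) (z : ℕ → Z) (j : ℕ) : Z := dt⁻¹ • (z (j + 1) - z j)

/-- backward difference quotient -/
noncomputable def bdiff {Z : Type*} [AddCommGroup Z] [Module ℝ Z]
    (dt : ℝ) (z : ℕ → Z) (j : ℕ) : Z := dt⁻¹ • (z j - z (j - 1))

/-- second difference quotient -/
noncomputable def ddq {Z : Type*} [AddCommGroup Z] [Module ℝ Z]
    (dt : ℝ) (z : ℕ → Z) (j : ℕ) : Z :=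
  (dt ^ 2)⁻¹ • (z (j + 1) - (2 : ℝ) • z j + z (j - 1))

/-- backward average -/
noncomputable def bavg {Z : Type*} [AddCommGroup Z] [Module ℝ Z]
    (z : ℕ → Z) (j : ℕ) : Z := (2 : ℝ)⁻¹ • (z j + z (j - 1))

/-- centered average -/
noncomputable def cavg {Z : Type*} [AddCommGroup Z] [Module ℝ Z]
    (z : ℕ → Z) (j : ℕ) : Z := (4 : ℝ)⁻¹ • (z (j + 1) + (2 : ℝ) • z j + z (j - 1))

/-- centered difference -/
noncomputable def cdiff {Z : Type*} [AddCommGroup Z] [Module ℝ Z]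
    (dt : ℝ) (z : ℕ → Z) (j : ℕ) : Z := (2 * dt)⁻¹ • (z (j + 1) - z (j - 1))

namespace Submodule

variable {𝕜 E : Type*} [RCLike 𝕜] [NormedAddCommGroup E] [InnerProductSpace 𝕜 E]

theorem sub_eq_of_eq_add_of_mem_orthogonal {K : Submodule 𝕜 E} {x y p q : E} (hx : x = p + q)
    (hp : p ∈ K) (hq : q ∈ Kᗮ) (hy : y ∈ K) (hxy : x - y ∈ Kᗮ) : x - y = q := by
  have hyp : y - p = 0 := by
    refine Submodule.disjoint_def.mp K.orthogonal_disjoint _ (K.sub_mem hy hp) ?_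
    have : y - p = q - (x - y) := by rw [hx]; abel
    exact this ▸ Kᗮ.sub_mem hq hxy
  rw [hx, sub_eq_zero.mp hyp]
  abel

theorem sum_smul_mem_span_image {R M ι : Type*} [Semiring R] [AddCommMonoid M] [Module R M]
    (φ : ι → M) (c : ι → R) (t : Finset ι) : ∑ k ∈ t, c k • φ k ∈ span R (φ '' t) :=
  sum_smul_mem _ c fun _ hk => subset_span (Set.mem_image_of_mem φ hk)

theorem span_image_le_orthogonal_span_image {ι : Type*} {φ : ι → E} {S T : Set ι}
    (h : ∀ k ∈ T, ∀ l ∈ S, inner 𝕜 (φ k) (φ l) = 0) : span 𝕜 (φ '' T) ≤ (span 𝕜 (φ '' S))ᗮ :=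
  isOrtho_span.mpr <| by simpa only [Set.forall_mem_image] using h

end Submodule

theorem norm_sq_sum_smul_of_inner_eq_ite {E ι : Type*} [NormedAddCommGroup E]
    [InnerProductSpace ℝ E] [DecidableEq ι] {φ : ι → E} {T : Finset ι}
    (hφ : ∀ k ∈ T, ∀ l ∈ T, ⟪φ k, φ l⟫ = if k = l then 1 else 0) (c : ι → ℝ) :
    ‖∑ k ∈ T, c k • φ k‖ ^ 2 = ∑ k ∈ T, c k ^ 2 := by
  rw [← real_inner_self_eq_norm_sq, sum_inner]
  refine Finset.sum_congr rfl fun k hk => ?_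
  simp_rw [inner_sum, real_inner_smul_left, real_inner_smul_right]
  rw [Finset.sum_congr rfl fun l hl => by rw [hφ k hk l hl]]
  simp [hk, sq]

theorem Finset.sum_Icc_one_add_sum_Icc_succ {M : Type*} [AddCommMonoid M] (g : ℕ → M)
    {r s : ℕ} (hrs : r ≤ s) :
    ∑ k ∈ Icc 1 r, g k + ∑ k ∈ Icc (r + 1) s, g k = ∑ k ∈ Icc 1 s, g k := by
  simp only [Finset.Icc_add_one_left_eq_Ioc]
  exact Finset.sum_Ioc_consecutive g (Nat.zero_le r) hrs

theorem stmt_0_general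
    {X : Type*} [NormedAddCommGroup X] [InnerProductSpace ℝ X]
    (N s : ℕ)
    (γ : ℕ → ℝ)
    (w : ℕ → X) (lam : ℕ → ℝ) (φ : ℕ → X) (f : ℕ → ℕ → ℝ)
    (hlam : ∀ k ∈ Finset.Icc 1 s, 0 < lam k)
    (hφ : ∀ k ∈ Finset.Icc 1 s, ∀ l ∈ Finset.Icc 1 s,
      ⟪φ k, φ l⟫ = if k = l then 1 else 0)
    (hf : ∀ k ∈ Finset.Icc 1 s, ∀ l ∈ Finset.Icc 1 s,
      (∑ j ∈ Finset.Icc 1 N, γ j * f k j * f l j) = if k = l then 1 else 0)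
    (hsvd : ∀ j ∈ Finset.Icc 1 N,
      w j = ∑ k ∈ Finset.Icc 1 s, (Real.sqrt (lam k) * f k j) • φ k)
    (r : ℕ) (hrs : r ≤ s)
    (Pr : X → X)
    (hPrmem : ∀ x, Pr x ∈ Submodule.span ℝ (φ '' Set.Icc 1 r))
    (hProrth : ∀ x, ∀ v ∈ Submodule.span ℝ (φ '' Set.Icc 1 r),
      ⟪x - Pr x, v⟫ = 0) :
    ∑ j ∈ Finset.Icc 1 N, γ j * ‖w j - Pr (w j)‖ ^ 2
      = ∑ k ∈ Finset.Icc (r + 1) s, lam k := by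
  have htail : Icc (r + 1) s ⊆ Icc 1 s := Icc_subset_Icc_left (Nat.le_add_left 1 r)
  have htail_orth : Submodule.span ℝ (φ '' Set.Icc (r + 1) s)
      ≤ (Submodule.span ℝ (φ '' Set.Icc 1 r))ᗮ := by
    refine Submodule.span_image_le_orthogonal_span_image fun k hk l hl => ?_
    simp only [Set.mem_Icc] at hk hl
    rw [hφ k (mem_Icc.mpr ⟨by omega, hk.2⟩) l (mem_Icc.mpr ⟨hl.1, hl.2.trans hrs⟩),
      if_neg (by omega)]
  have hresidual (j) (hj : j ∈ Icc 1 N) :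
      w j - Pr (w j) = ∑ k ∈ Icc (r + 1) s, (√(lam k) * f k j) • φ k := by
    refine Submodule.sub_eq_of_eq_add_of_mem_orthogonal
      ((hsvd j hj).trans (sum_Icc_one_add_sum_Icc_succ _ hrs).symm) ?_ (htail_orth ?_)
      (hPrmem _) ((Submodule.mem_orthogonal' _ _).mpr (hProrth _)) <;>
    exact Finset.coe_Icc (α := ℕ) _ _ ▸ Submodule.sum_smul_mem_span_image φ _ _
  calc ∑ j ∈ Icc 1 N, γ j * ‖w j - Pr (w j)‖ ^ 2
      = ∑ j ∈ Icc 1 N, ∑ k ∈ Icc (r + 1) s, lam k * (γ j * f k j * f k j) := by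
        refine sum_congr rfl fun j hj => ?_
        rw [hresidual j hj, norm_sq_sum_smul_of_inner_eq_ite
          (fun k hk l hl => hφ k (htail hk) l (htail hl)), mul_sum]
        refine sum_congr rfl fun k hk => ?_
        rw [mul_pow, Real.sq_sqrt (hlam k (htail hk)).le]
        ring
    _ = ∑ k ∈ Icc (r + 1) s, lam k := by
        rw [sum_comm]
        refine sum_congr rfl fun k hk => ?_
        rw [← mul_sum, hf k (htail hk) k (htail hk), if_pos rfl, mul_one]

theorem stmt_0
    {X : Type*} [NormedAddCommGroup X] [InnerProductSpace ℝ X] [CompleteSpace X]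
    (N s : ℕ) (hN : 1 ≤ N)
    (γ : ℕ → ℝ) (hγ : ∀ j ∈ Finset.Icc 1 N, 0 < γ j)
    (w : ℕ → X) (lam : ℕ → ℝ) (φ : ℕ → X) (f : ℕ → ℕ → ℝ)
    (hlam : ∀ k ∈ Finset.Icc 1 s, 0 < lam k)
    (hφ : ∀ k ∈ Finset.Icc 1 s, ∀ l ∈ Finset.Icc 1 s,
      ⟪φ k, φ l⟫ = if k = l then 1 else 0)
    (hf : ∀ k ∈ Finset.Icc 1 s, ∀ l ∈ Finset.Icc 1 s,
      (∑ j ∈ Finset.Icc 1 N, γ j * f k j * f l j) = if k = l then 1 else 0)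
    (hsvd : ∀ j ∈ Finset.Icc 1 N,
      w j = ∑ k ∈ Finset.Icc 1 s, (Real.sqrt (lam k) * f k j) • φ k)
    (r : ℕ) (hr1 : 1 ≤ r) (hrs : r ≤ s)
    (Pr : X → X)
    (hPrmem : ∀ x, Pr x ∈ Submodule.span ℝ (φ '' Set.Icc 1 r))
    (hProrth : ∀ x, ∀ v ∈ Submodule.span ℝ (φ '' Set.Icc 1 r),
      ⟪x - Pr x, v⟫ = 0) :
    ∑ j ∈ Finset.Icc 1 N, γ j * ‖w j - Pr (w j)‖ ^ 2
      = ∑ k ∈ Finset.Icc (r + 1) s, lam k :=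
  stmt_0_general N s γ w lam φ f hlam hφ hf hsvd r hrs Pr hPrmem hProrth
end

section
/- (Standard POD extended data error formula, Y-norm version.) Under the POD decomposition hypothesis, if (·,·)_Y is a second inner product on X with norm ‖·‖_Y, then for every 1 ≤ r ≤ s one has Σ_{j=1}^N γ_j ‖w^j − Π_r^X w^j‖_Y² = Σ_{k=r+1}^s λ_k ‖φ_k‖_Y². -/
open Finset RealInnerProductSpace

/-! The data split as `w j = ∑_{k ≤ r} + ∑_{k > r}`; the first part lies in `X_r` and the second is
orthogonal to it, so `w j - Π_r w j` is the tail `∑_{k > r} √λₖ fₖ(j) φₖ`. Expanding the weighted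
`Y`-energy of the tails bilinearly, the `Γ`-orthonormality of the `fₖ` removes every cross term
`(φₖ, φₗ)_Y`, `k ≠ l`, and leaves `∑_{k > r} λₖ ‖φₖ‖_Y²`. -/

section OrthogonalResidual

variable {E : Type*} [NormedAddCommGroup E] [InnerProductSpace ℝ E]

theorem sum_smul_mem_orthogonal_span_image {ι : Type*} (φ : ι → E) (A : Set ι) (B : Finset ι)
    (hAB : ∀ l ∈ A, ∀ k ∈ B, ⟪φ l, φ k⟫ = 0) (c : ι → ℝ) :
    ∑ k ∈ B, c k • φ k ∈ (Submodule.span ℝ (φ '' A))ᗮ := by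
  have hortho : Submodule.span ℝ (φ '' A) ⟂ Submodule.span ℝ (φ '' B) := by
    rw [Submodule.isOrtho_span]
    rintro _ ⟨l, hl, rfl⟩ _ ⟨k, hk, rfl⟩
    exact hAB l hl k hk
  refine Submodule.isOrtho_iff_le.mp hortho.symm (Submodule.sum_smul_mem _ c fun k hk => ?_)
  exact Submodule.subset_span ⟨k, hk, rfl⟩

theorem sub_eq_of_add_mem_orthogonal {K : Submodule ℝ E} {P : E → E}
    (hPK : ∀ x, P x ∈ K) (hP : ∀ x, ∀ v ∈ K, ⟪x - P x, v⟫ = 0)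
    {p q : E} (hp : p ∈ K) (hq : q ∈ Kᗮ) : p + q - P (p + q) = q := by
  have hres : p + q - P (p + q) ∈ Kᗮ := (K.mem_orthogonal' _).mpr (hP _)
  have hdiff : P (p + q) - p ∈ K ⊓ Kᗮ := by
    refine ⟨K.sub_mem (hPK _) hp, ?_⟩
    rw [show P (p + q) - p = q - (p + q - P (p + q)) by abel]
    exact Kᗮ.sub_mem hq hres
  rw [K.inf_orthogonal_eq_bot, Submodule.mem_bot, sub_eq_zero] at hdiff
  rw [hdiff, add_sub_cancel_left]

end OrthogonalResidual

theorem sum_weight_mul_bilin_sum_smul_of_orthonormal {E ι κ : Type*} [AddCommGroup E] [Module ℝ E]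
    [DecidableEq ι] (B : E →ₗ[ℝ] E →ₗ[ℝ] ℝ) (T : Finset ι) (J : Finset κ) (γ : κ → ℝ)
    (a : ι → ℝ) (c : ι → κ → ℝ) (v : ι → E)
    (hc : ∀ k ∈ T, ∀ l ∈ T, ∑ j ∈ J, γ j * c k j * c l j = if k = l then 1 else 0) :
    ∑ j ∈ J, γ j * B (∑ k ∈ T, (a k * c k j) • v k) (∑ l ∈ T, (a l * c l j) • v l)
      = ∑ k ∈ T, a k ^ 2 * B (v k) (v k) := by
  calc ∑ j ∈ J, γ j * B (∑ k ∈ T, (a k * c k j) • v k) (∑ l ∈ T, (a l * c l j) • v l)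
      = ∑ l ∈ T, ∑ k ∈ T, a k * a l * B (v k) (v l) * ∑ j ∈ J, γ j * c k j * c l j := by
        simp only [map_sum, LinearMap.sum_apply, map_smul, LinearMap.smul_apply, smul_eq_mul,
          Finset.mul_sum]
        rw [Finset.sum_comm]
        refine Finset.sum_congr rfl fun l _ => ?_
        rw [Finset.sum_comm]
        exact Finset.sum_congr rfl fun k _ => Finset.sum_congr rfl fun j _ => by ring
    _ = ∑ k ∈ T, a k ^ 2 * B (v k) (v k) := by
        rw [Finset.sum_comm]
        refine Finset.sum_congr rfl fun k hk => ?_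
        rw [Finset.sum_congr rfl fun l hl => by rw [hc k hk l hl, mul_ite, mul_one, mul_zero],
          Finset.sum_ite_eq T k, if_pos hk, sq]

theorem stmt_1_general
    {X : Type*} [NormedAddCommGroup X] [InnerProductSpace ℝ X]
    (N s : ℕ)
    (γ : ℕ → ℝ)
    (w : ℕ → X) (lam : ℕ → ℝ) (φ : ℕ → X) (f : ℕ → ℕ → ℝ)
    (hlam : ∀ k ∈ Finset.Icc 1 s, 0 < lam k)
    (hφ : ∀ k ∈ Finset.Icc 1 s, ∀ l ∈ Finset.Icc 1 s,
      ⟪φ k, φ l⟫ = if k = l then 1 else 0)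
    (hf : ∀ k ∈ Finset.Icc 1 s, ∀ l ∈ Finset.Icc 1 s,
      (∑ j ∈ Finset.Icc 1 N, γ j * f k j * f l j) = if k = l then 1 else 0)
    (hsvd : ∀ j ∈ Finset.Icc 1 N,
      w j = ∑ k ∈ Finset.Icc 1 s, (Real.sqrt (lam k) * f k j) • φ k)
    (r : ℕ) (hrs : r ≤ s)
    (Pr : X → X)
    (hPrmem : ∀ x, Pr x ∈ Submodule.span ℝ (φ '' Set.Icc 1 r))
    (hProrth : ∀ x, ∀ v ∈ Submodule.span ℝ (φ '' Set.Icc 1 r),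
      ⟪x - Pr x, v⟫ = 0)
    (ipY : X →ₗ[ℝ] X →ₗ[ℝ] ℝ) :
    ∑ j ∈ Finset.Icc 1 N, γ j * ipY (w j - Pr (w j)) (w j - Pr (w j))
      = ∑ k ∈ Finset.Icc (r + 1) s, lam k * ipY (φ k) (φ k) := by
  have htail : ∀ k ∈ Finset.Icc (r + 1) s, k ∈ Finset.Icc 1 s := fun k hk => by
    simp only [Finset.mem_Icc] at hk ⊢; omega
  have hres : ∀ j ∈ Finset.Icc 1 N,
      w j - Pr (w j) = ∑ k ∈ Finset.Icc (r + 1) s, (Real.sqrt (lam k) * f k j) • φ k := by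
    intro j hj
    have hsplit := Finset.sum_Ioc_consecutive (fun k => (Real.sqrt (lam k) * f k j) • φ k)
      (Nat.zero_le r) hrs
    simp only [← Finset.Icc_add_one_left_eq_Ioc, zero_add] at hsplit
    rw [hsvd j hj, ← hsplit]
    refine sub_eq_of_add_mem_orthogonal hPrmem hProrth
      (Submodule.sum_smul_mem _ _ fun k hk => Submodule.subset_span ⟨k, by simpa using hk, rfl⟩)
      (sum_smul_mem_orthogonal_span_image φ _ _ (fun l hl k hk => ?_) _)
    have hlk : l ≠ k := by simp only [Set.mem_Icc, Finset.mem_Icc] at hl hk; omega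
    rw [hφ l (by simp only [Set.mem_Icc, Finset.mem_Icc] at hl ⊢; omega) k (htail k hk), if_neg hlk]
  rw [Finset.sum_congr rfl fun j hj => by rw [hres j hj],
    sum_weight_mul_bilin_sum_smul_of_orthonormal ipY _ _ γ _ f φ
      fun k hk l hl => hf k (htail k hk) l (htail l hl)]
  exact Finset.sum_congr rfl fun k hk => by rw [Real.sq_sqrt (hlam k (htail k hk)).le]

theorem stmt_1
    {X : Type*} [NormedAddCommGroup X] [InnerProductSpace ℝ X] [CompleteSpace X]
    (N s : ℕ) (hN : 1 ≤ N)
    (γ : ℕ → ℝ) (hγ : ∀ j ∈ Finset.Icc 1 N, 0 < γ j)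
    (w : ℕ → X) (lam : ℕ → ℝ) (φ : ℕ → X) (f : ℕ → ℕ → ℝ)
    (hlam : ∀ k ∈ Finset.Icc 1 s, 0 < lam k)
    (hφ : ∀ k ∈ Finset.Icc 1 s, ∀ l ∈ Finset.Icc 1 s,
      ⟪φ k, φ l⟫ = if k = l then 1 else 0)
    (hf : ∀ k ∈ Finset.Icc 1 s, ∀ l ∈ Finset.Icc 1 s,
      (∑ j ∈ Finset.Icc 1 N, γ j * f k j * f l j) = if k = l then 1 else 0)
    (hsvd : ∀ j ∈ Finset.Icc 1 N,
      w j = ∑ k ∈ Finset.Icc 1 s, (Real.sqrt (lam k) * f k j) • φ k)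
    (r : ℕ) (hr1 : 1 ≤ r) (hrs : r ≤ s)
    (Pr : X → X)
    (hPrmem : ∀ x, Pr x ∈ Submodule.span ℝ (φ '' Set.Icc 1 r))
    (hProrth : ∀ x, ∀ v ∈ Submodule.span ℝ (φ '' Set.Icc 1 r),
      ⟪x - Pr x, v⟫ = 0)
    (ipY : X →ₗ[ℝ] X →ₗ[ℝ] ℝ)
    (hYsymm : ∀ x y, ipY x y = ipY y x)
    (hYpos : ∀ x : X, x ≠ 0 → 0 < ipY x x) :
    ∑ j ∈ Finset.Icc 1 N, γ j * ipY (w j - Pr (w j)) (w j - Pr (w j))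
      = ∑ k ∈ Finset.Icc (r + 1) s, lam k * ipY (φ k) (φ k) :=
  stmt_1_general N s γ w lam φ f hlam hφ hf hsvd r hrs Pr hPrmem hProrth ipY
end

section
/- (Standard POD extended data error formula, general projection version.) Under the POD decomposition hypothesis, if (·,·)_Y is a second inner product on X with norm ‖·‖_Y and π_r : X → X is a linear map satisfying π_r ∘ π_r = π_r and range(π_r) = X_r (a projection onto X_r), then for every 1 ≤ r ≤ s one has Σ_{j=1}^N γ_j ‖w^j − π_r w^j‖_Y² = Σ_{k=r+1}^s λ_k ‖φ_k − π_r φ_k‖_Y². -/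
open Finset RealInnerProductSpace

/-
The residual `w j - π (w j)` only sees the modes `k > r`, since `π` fixes `φ 1, …, φ r`:
it is `∑_{k > r} f k j • (√λ_k • (φ k - π (φ k)))`. Expanding the bilinear form and summing
over `j` first, the weighted orthonormality of the `f k` collapses the double sum over modes
to its diagonal, where `√λ_k ^ 2 = λ_k`.
-/

theorem sum_smul_sub_map_sum_smul_eq {R M ι : Type*} [Ring R] [AddCommGroup M] [Module R M]
    {π : M →ₗ[R] M} {S T : Finset ι} (hTS : T ⊆ S)
    (c : ι → R) (v : ι → M) (hfix : ∀ k ∈ S, k ∉ T → π (v k) = v k) :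
    (∑ k ∈ S, c k • v k) - π (∑ k ∈ S, c k • v k) = ∑ k ∈ T, c k • (v k - π (v k)) := by
  simp only [map_sum, map_smul, ← sum_sub_distrib, ← smul_sub]
  refine (sum_subset hTS fun k hkS hkT => ?_).symm
  rw [hfix k hkS hkT, sub_self, smul_zero]

theorem sum_weight_mul_bilin_eq_of_orthonormal {R M ι κ : Type*} [CommRing R] [AddCommGroup M]
    [Module R M] [DecidableEq κ] (B : M →ₗ[R] M →ₗ[R] R)
    (J : Finset ι) (K : Finset κ) (γ : ι → R) (a : κ → ι → R) (v : κ → M)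
    (ha : ∀ k ∈ K, ∀ l ∈ K, ∑ j ∈ J, γ j * a k j * a l j = if k = l then 1 else 0) :
    ∑ j ∈ J, γ j * B (∑ k ∈ K, a k j • v k) (∑ k ∈ K, a k j • v k)
      = ∑ k ∈ K, B (v k) (v k) := by
  calc ∑ j ∈ J, γ j * B (∑ k ∈ K, a k j • v k) (∑ k ∈ K, a k j • v k)
      = ∑ k ∈ K, ∑ l ∈ K, (∑ j ∈ J, γ j * a k j * a l j) * B (v k) (v l) := by
        simp only [map_sum, map_smul, LinearMap.sum_apply, LinearMap.smul_apply, smul_eq_mul,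
          mul_sum, sum_mul]
        rw [sum_comm]
        refine (sum_congr rfl fun l _ => sum_comm).trans (sum_comm.trans
          (sum_congr rfl fun k _ => sum_congr rfl fun l _ => sum_congr rfl fun j _ => ?_))
        ring
    _ = ∑ k ∈ K, B (v k) (v k) := by
        refine sum_congr rfl fun k hk => ?_
        simp only [sum_congr rfl fun l hl => congrArg (· * B (v k) (v l)) (ha k hk l hl),
          ite_mul, one_mul, zero_mul, sum_ite_eq, if_pos hk]

theorem LinearMap.map_eq_self_of_range_eq_span {R M ι : Type*} [Semiring R]
    [AddCommMonoid M] [Module R M] {π : M →ₗ[R] M} (hππ : ∀ x, π (π x) = π x) {v : ι → M}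
    {A : Set ι} (hrange : LinearMap.range π = Submodule.span R (v '' A)) {k : ι} (hk : k ∈ A) :
    π (v k) = v k := by
  have hidem : IsIdempotentElem π := LinearMap.ext hππ
  rw [← IsIdempotentElem.mem_range_iff hidem, hrange]
  exact Submodule.subset_span ⟨k, hk, rfl⟩

theorem stmt_2_general
    {X : Type*} [NormedAddCommGroup X] [InnerProductSpace ℝ X]
    (N s : ℕ)
    (γ : ℕ → ℝ)
    (w : ℕ → X) (lam : ℕ → ℝ) (φ : ℕ → X) (f : ℕ → ℕ → ℝ)
    (hlam : ∀ k ∈ Finset.Icc 1 s, 0 < lam k)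
    (hf : ∀ k ∈ Finset.Icc 1 s, ∀ l ∈ Finset.Icc 1 s,
      (∑ j ∈ Finset.Icc 1 N, γ j * f k j * f l j) = if k = l then 1 else 0)
    (hsvd : ∀ j ∈ Finset.Icc 1 N,
      w j = ∑ k ∈ Finset.Icc 1 s, (Real.sqrt (lam k) * f k j) • φ k)
    (r : ℕ)
    (ipY : X →ₗ[ℝ] X →ₗ[ℝ] ℝ)
    (π : X →ₗ[ℝ] X)
    (hππ : ∀ x, π (π x) = π x)
    (hπrange : LinearMap.range π = Submodule.span ℝ (φ '' Set.Icc 1 r)) :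
    ∑ j ∈ Finset.Icc 1 N, γ j * ipY (w j - π (w j)) (w j - π (w j))
      = ∑ k ∈ Finset.Icc (r + 1) s, lam k * ipY (φ k - π (φ k)) (φ k - π (φ k)) := by
  have htail : Icc (r + 1) s ⊆ Icc 1 s := Icc_subset_Icc_left (Nat.le_add_left 1 r)
  set e : ℕ → X := fun k => Real.sqrt (lam k) • (φ k - π (φ k))
  have hres : ∀ j ∈ Icc 1 N, w j - π (w j) = ∑ k ∈ Icc (r + 1) s, f k j • e k := by
    intro j hj
    rw [hsvd j hj, sum_smul_sub_map_sum_smul_eq htail]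
    · exact sum_congr rfl fun k _ => by simp only [e, smul_smul, mul_comm]
    · intro k hkS hkT
      refine π.map_eq_self_of_range_eq_span hππ hπrange ?_
      simp only [mem_Icc, Set.mem_Icc] at hkS hkT ⊢
      omega
  rw [sum_congr rfl fun j hj => by rw [hres j hj],
    sum_weight_mul_bilin_eq_of_orthonormal ipY _ _ γ f e
      fun k hk l hl => hf k (htail hk) l (htail hl)]
  refine sum_congr rfl fun k hk => ?_
  simp only [e, map_smul, LinearMap.smul_apply, smul_eq_mul, ← mul_assoc,
    Real.mul_self_sqrt (hlam k (htail hk)).le]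

theorem stmt_2
    {X : Type*} [NormedAddCommGroup X] [InnerProductSpace ℝ X] [CompleteSpace X]
    (N s : ℕ) (hN : 1 ≤ N)
    (γ : ℕ → ℝ) (hγ : ∀ j ∈ Finset.Icc 1 N, 0 < γ j)
    (w : ℕ → X) (lam : ℕ → ℝ) (φ : ℕ → X) (f : ℕ → ℕ → ℝ)
    (hlam : ∀ k ∈ Finset.Icc 1 s, 0 < lam k)
    (hφ : ∀ k ∈ Finset.Icc 1 s, ∀ l ∈ Finset.Icc 1 s,
      ⟪φ k, φ l⟫ = if k = l then 1 else 0)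
    (hf : ∀ k ∈ Finset.Icc 1 s, ∀ l ∈ Finset.Icc 1 s,
      (∑ j ∈ Finset.Icc 1 N, γ j * f k j * f l j) = if k = l then 1 else 0)
    (hsvd : ∀ j ∈ Finset.Icc 1 N,
      w j = ∑ k ∈ Finset.Icc 1 s, (Real.sqrt (lam k) * f k j) • φ k)
    (r : ℕ) (hr1 : 1 ≤ r) (hrs : r ≤ s)
    (ipY : X →ₗ[ℝ] X →ₗ[ℝ] ℝ)
    (hYsymm : ∀ x y, ipY x y = ipY y x)
    (hYpos : ∀ x : X, x ≠ 0 → 0 < ipY x x)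
    (π : X →ₗ[ℝ] X)
    (hππ : ∀ x, π (π x) = π x)
    (hπrange : LinearMap.range π = Submodule.span ℝ (φ '' Set.Icc 1 r)) :
    ∑ j ∈ Finset.Icc 1 N, γ j * ipY (w j - π (w j)) (w j - π (w j))
      = ∑ k ∈ Finset.Icc (r + 1) s, lam k * ipY (φ k - π (φ k)) (φ k - π (φ k)) :=
  stmt_2_general N s γ w lam φ f hlam hf hsvd r ipY π hππ hπrange
end

section
/- (Pointwise data error bounds for the DQ POD operator K₁.) Let T > 0, N ≥ 2, Δt = T/(N−1), and u^1,…,u^N ∈ X. Suppose the POD decomposition hypothesis holds for the DQ data set w^1 = u^1 and w^{j+1} = ∂u^j (j = 1,…,N−1) with weights γ_1 = 1 and γ_j = Δt for j = 2,…,N, with POD eigenvalues λ_k^{DQ1}, modes φ_k, and rank s. Then with C = 2 max{T,1}: (i) max_{1≤j≤N} ‖u^j − Π_r^X u^j‖_X² ≤ C Σ_{k=r+1}^s λ_k^{DQ1}; (ii) if (·,·)_Y is a second inner product on X then max_{1≤j≤N} ‖u^j − Π_r^X u^j‖_Y² ≤ C Σ_{k=r+1}^s λ_k^{DQ1} ‖φ_k‖_Y²;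 (iii) if in addition π_r : X → X is a linear projection onto X_r (π_r∘π_r = π_r, range(π_r) = X_r), then max_{1≤j≤N} ‖u^j − π_r u^j‖_Y² ≤ C Σ_{k=r+1}^s λ_k^{DQ1} ‖φ_k − π_r φ_k‖_Y². -/
open Finset RealInnerProductSpace

/-!
Every snapshot is a weighted sum of the DQ data, `u j = ∑ i ∈ Icc 1 j, γ i • w i`. For a
positive semidefinite bilinear form `B`, the Cauchy–Schwarz inequality in the form
`B (∑ cᵢ vᵢ) (∑ cᵢ vᵢ) ≤ (∑ cᵢ) ∑ cᵢ B vᵢ vᵢ` then bounds `B (u j) (u j)` by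
`(1 + T) ∑ i, γ i B (w i) (w i)`, since the weights add up to `1 + (N - 1) dt = 1 + T`, and the
`Γ`-orthonormality of the temporal modes turns this sum into `∑ k, λ_k B (φ k) (φ k)`.
Applying this to `B (E ·) (E ·)` for `E = id - Π_r` or `E = id - π_r`, which kill `φ 1, …, φ r`,
gives the three bounds, because `1 + T ≤ 2 max T 1`.
-/

open LinearMap (BilinForm)

namespace LinearMap.BilinForm

variable {R M ι : Type*} [CommRing R] [LinearOrder R] [IsStrictOrderedRing R]
  [AddCommGroup M] [Module R M]

theorem apply_sum_smul_le (B : BilinForm R M) (hB : ∀ x, 0 ≤ B x x) (S : Finset ι)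
    {c : ι → R} (hc : ∀ i ∈ S, 0 ≤ c i) (v : ι → M) :
    B (∑ i ∈ S, c i • v i) (∑ i ∈ S, c i • v i) ≤
      (∑ i ∈ S, c i) * ∑ i ∈ S, c i * B (v i) (v i) := by
  have hpair : ∀ x y, B x y + B y x ≤ B x x + B y y := fun x y => by
    have := hB (x - y)
    simp only [map_sub, LinearMap.sub_apply] at this
    linarith
  have hlhs : B (∑ i ∈ S, c i • v i) (∑ i ∈ S, c i • v i) =
      ∑ i ∈ S, ∑ j ∈ S, c i * c j * B (v i) (v j) := by
    simp only [map_sum, map_smul, LinearMap.sum_apply, LinearMap.smul_apply, smul_eq_mul,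
      Finset.mul_sum]
    rw [Finset.sum_comm]
    refine Finset.sum_congr rfl fun i _ => Finset.sum_congr rfl fun j _ => ?_
    ring
  rw [hlhs, Finset.sum_mul_sum]
  suffices 2 * ∑ i ∈ S, ∑ j ∈ S, c i * c j * B (v i) (v j) ≤
      2 * ∑ i ∈ S, ∑ j ∈ S, c i * (c j * B (v j) (v j)) by linarith
  -- after symmetrizing both double sums, compare them termwise with `hpair`
  have hswap : ∀ g : ι → ι → R, 2 * ∑ i ∈ S, ∑ j ∈ S, g i j =
      ∑ i ∈ S, ∑ j ∈ S, (g i j + g j i) := fun g => by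
    rw [two_mul]
    nth_rewrite 2 [Finset.sum_comm]
    simp only [← Finset.sum_add_distrib]
  rw [hswap, hswap]
  refine Finset.sum_le_sum fun i hi => Finset.sum_le_sum fun j hj => ?_
  have := mul_le_mul_of_nonneg_left (hpair (v i) (v j)) (mul_nonneg (hc i hi) (hc j hj))
  linarith

end LinearMap.BilinForm

theorem sum_mul_apply_self_eq_of_pod {M ι κ : Type*} [AddCommGroup M] [Module ℝ M] [DecidableEq κ]
    (B : BilinForm ℝ M) (I : Finset ι) (K : Finset κ) (γ : ι → ℝ) (lam : κ → ℝ)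
    (φ : κ → M) (f : κ → ι → ℝ) (w : ι → M) (hlam : ∀ k ∈ K, 0 ≤ lam k)
    (hf : ∀ k ∈ K, ∀ l ∈ K, ∑ i ∈ I, γ i * f k i * f l i = if k = l then 1 else 0)
    (hw : ∀ i ∈ I, w i = ∑ k ∈ K, (Real.sqrt (lam k) * f k i) • φ k) :
    ∑ i ∈ I, γ i * B (w i) (w i) = ∑ k ∈ K, lam k * B (φ k) (φ k) := by
  calc ∑ i ∈ I, γ i * B (w i) (w i)
      = ∑ i ∈ I, ∑ k ∈ K, ∑ l ∈ K, Real.sqrt (lam k) * Real.sqrt (lam l) * B (φ k) (φ l) *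
          (γ i * f k i * f l i) := sum_congr rfl fun i hi => by
        simp only [hw i hi, map_sum, map_smul, LinearMap.sum_apply, LinearMap.smul_apply,
          smul_eq_mul, mul_sum]
        rw [sum_comm]
        refine sum_congr rfl fun k _ => sum_congr rfl fun l _ => ?_
        ring
    _ = ∑ k ∈ K, ∑ l ∈ K, Real.sqrt (lam k) * Real.sqrt (lam l) * B (φ k) (φ l) *
          ∑ i ∈ I, γ i * f k i * f l i := by
        rw [sum_comm]
        refine sum_congr rfl fun k _ => ?_
        rw [sum_comm]
        simp only [mul_sum]
    _ = ∑ k ∈ K, lam k * B (φ k) (φ k) := sum_congr rfl fun k hk => by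
        simp only [sum_congr rfl fun l hl => congrArg _ (hf k hk l hl), mul_ite, mul_one,
          mul_zero, sum_ite_eq, if_pos hk, Real.mul_self_sqrt (hlam k hk)]

theorem eq_sum_smul_of_dq {Z : Type*} [AddCommGroup Z] [Module ℝ Z] {dt : ℝ} (hdt : dt ≠ 0)
    {N : ℕ} {u w : ℕ → Z} {γ : ℕ → ℝ} (hw1 : w 1 = u 1)
    (hwj : ∀ j ∈ Icc 1 (N - 1), w (j + 1) = fdiff dt u j)
    (hγ1 : γ 1 = 1) (hγj : ∀ j ∈ Icc 2 N, γ j = dt) :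
    ∀ j ∈ Icc 1 N, u j = ∑ i ∈ Icc 1 j, γ i • w i := by
  intro j hj
  obtain ⟨hj1, hjN⟩ := mem_Icc.mp hj
  clear hj
  induction j, hj1 using Nat.le_induction with
  | base => simp [hγ1, hw1]
  | succ j hj1 ih =>
    rw [sum_Icc_succ_top (by omega), ← ih (by omega), hγj (j + 1) (mem_Icc.mpr ⟨by omega, hjN⟩),
      hwj j (mem_Icc.mpr ⟨hj1, by omega⟩), fdiff, smul_smul, mul_inv_cancel₀ hdt, one_smul,
      add_sub_cancel]

theorem sum_dq_weights {dt : ℝ} {N : ℕ} (hN : 1 ≤ N) {γ : ℕ → ℝ} (hγ1 : γ 1 = 1)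
    (hγj : ∀ j ∈ Icc 2 N, γ j = dt) :
    ∑ i ∈ Icc 1 N, γ i = 1 + ((N : ℝ) - 1) * dt := by
  rw [← insert_Icc_succ_left_eq_Icc hN, sum_insert (by simp), Nat.succ_eq_succ,
    Nat.succ_eq_add_one, hγ1, sum_congr rfl hγj, sum_const]
  simp [Nat.cast_sub hN]

section DQ

variable {X : Type*} [AddCommGroup X] [Module ℝ X] {T dt : ℝ} {N s : ℕ} {u w φ : ℕ → X}
  {γ lam : ℕ → ℝ} {f : ℕ → ℕ → ℝ}

theorem apply_self_le_of_dq_pod (hT : 0 < T) (hN : 2 ≤ N) (hdt : dt = T / ((N : ℝ) - 1))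
    (hw1 : w 1 = u 1) (hwj : ∀ j ∈ Icc 1 (N - 1), w (j + 1) = fdiff dt u j)
    (hγ1 : γ 1 = 1) (hγj : ∀ j ∈ Icc 2 N, γ j = dt) (hlam : ∀ k ∈ Icc 1 s, 0 ≤ lam k)
    (hf : ∀ k ∈ Icc 1 s, ∀ l ∈ Icc 1 s,
      (∑ j ∈ Icc 1 N, γ j * f k j * f l j) = if k = l then 1 else 0)
    (hsvd : ∀ j ∈ Icc 1 N, w j = ∑ k ∈ Icc 1 s, (Real.sqrt (lam k) * f k j) • φ k)
    (B : BilinForm ℝ X) (hB : ∀ x, 0 ≤ B x x) :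
    ∀ j ∈ Icc 1 N, B (u j) (u j) ≤ (1 + T) * ∑ k ∈ Icc 1 s, lam k * B (φ k) (φ k) := by
  intro j hj
  have hN1 : (0 : ℝ) < (N : ℝ) - 1 := by
    have : (2 : ℝ) ≤ N := by exact_mod_cast hN
    linarith
  have hdt0 : 0 < dt := hdt ▸ div_pos hT hN1
  have hγ0 : ∀ i ∈ Icc 1 N, 0 ≤ γ i := fun i hi => by
    rcases eq_or_ne i 1 with rfl | hi1
    · rw [hγ1]; exact zero_le_one
    · rw [hγj i (by simp only [mem_Icc] at hi ⊢; omega)]; exact hdt0.le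
  have hsub : Icc 1 j ⊆ Icc 1 N := Icc_subset_Icc_right (mem_Icc.mp hj).2
  calc B (u j) (u j) = B (∑ i ∈ Icc 1 j, γ i • w i) (∑ i ∈ Icc 1 j, γ i • w i) := by
        rw [← eq_sum_smul_of_dq hdt0.ne' hw1 hwj hγ1 hγj j hj]
    _ ≤ (∑ i ∈ Icc 1 j, γ i) * ∑ i ∈ Icc 1 j, γ i * B (w i) (w i) :=
        B.apply_sum_smul_le hB _ (fun i hi => hγ0 i (hsub hi)) w
    _ ≤ (∑ i ∈ Icc 1 N, γ i) * ∑ i ∈ Icc 1 N, γ i * B (w i) (w i) := by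
        have hγB : ∀ i ∈ Icc 1 N, 0 ≤ γ i * B (w i) (w i) := fun i hi =>
          mul_nonneg (hγ0 i hi) (hB _)
        exact mul_le_mul (sum_le_sum_of_subset_of_nonneg hsub fun i hi _ => hγ0 i hi)
          (sum_le_sum_of_subset_of_nonneg hsub fun i hi _ => hγB i hi)
          (sum_nonneg fun i hi => hγB i (hsub hi)) (sum_nonneg hγ0)
    _ = (1 + T) * ∑ k ∈ Icc 1 s, lam k * B (φ k) (φ k) := by
        rw [sum_dq_weights (by omega) hγ1 hγj, hdt, mul_div_cancel₀ _ hN1.ne',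
          sum_mul_apply_self_eq_of_pod B _ _ γ lam φ f w hlam hf hsvd]

theorem apply_self_map_le_of_dq_pod {Y : Type*} [AddCommGroup Y] [Module ℝ Y] (hT : 0 < T)
    (hN : 2 ≤ N) (hdt : dt = T / ((N : ℝ) - 1))
    (hw1 : w 1 = u 1) (hwj : ∀ j ∈ Icc 1 (N - 1), w (j + 1) = fdiff dt u j)
    (hγ1 : γ 1 = 1) (hγj : ∀ j ∈ Icc 2 N, γ j = dt) (hlam : ∀ k ∈ Icc 1 s, 0 ≤ lam k)
    (hf : ∀ k ∈ Icc 1 s, ∀ l ∈ Icc 1 s,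
      (∑ j ∈ Icc 1 N, γ j * f k j * f l j) = if k = l then 1 else 0)
    (hsvd : ∀ j ∈ Icc 1 N, w j = ∑ k ∈ Icc 1 s, (Real.sqrt (lam k) * f k j) • φ k)
    (B : BilinForm ℝ Y) (hB : ∀ y, 0 ≤ B y y) (E : X →ₗ[ℝ] Y) {r : ℕ}
    (hE : ∀ k ∈ Icc 1 r, E (φ k) = 0) :
    ∀ j ∈ Icc 1 N, B (E (u j)) (E (u j)) ≤
      2 * max T 1 * ∑ k ∈ Icc (r + 1) s, lam k * B (E (φ k)) (E (φ k)) := by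
  intro j hj
  have hsplit : ∑ k ∈ Icc 1 s, lam k * B (E (φ k)) (E (φ k)) =
      ∑ k ∈ Icc (r + 1) s, lam k * B (E (φ k)) (E (φ k)) := by
    refine (sum_subset (Icc_subset_Icc_left (by omega)) fun k hk hk' => ?_).symm
    simp only [mem_Icc, not_and_or, not_le] at hk hk'
    simp [hE k (mem_Icc.mpr ⟨hk.1, by omega⟩)]
  have hnonneg : 0 ≤ ∑ k ∈ Icc 1 s, lam k * B (E (φ k)) (E (φ k)) :=
    sum_nonneg fun k hk => mul_nonneg (hlam k hk) (hB _)
  calc B (E (u j)) (E (u j)) ≤ (1 + T) * ∑ k ∈ Icc 1 s, lam k * B (E (φ k)) (E (φ k)) :=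
        apply_self_le_of_dq_pod hT hN hdt hw1 hwj hγ1 hγj hlam hf hsvd (B.compl₁₂ E E)
          (fun x => hB (E x)) j hj
    _ ≤ 2 * max T 1 * ∑ k ∈ Icc (r + 1) s, lam k * B (E (φ k)) (E (φ k)) := by
        rw [← hsplit]
        gcongr
        linarith [le_max_left T 1, le_max_right T 1]

end DQ

theorem Submodule.starProjection_span_eq_zero {𝕜 E : Type*} [RCLike 𝕜] [NormedAddCommGroup E]
    [InnerProductSpace 𝕜 E] {t : Set E} [(Submodule.span 𝕜 t).HasOrthogonalProjection] {v : E}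
    (h : ∀ x ∈ t, inner 𝕜 x v = 0) : (Submodule.span 𝕜 t).starProjection v = 0 :=
  (Submodule.starProjection_apply_eq_zero_iff _).mpr <|
    (Submodule.isOrtho_span.mpr fun x hx _ hv => (Set.mem_singleton_iff.mp hv) ▸ h x hx).ge
      (Submodule.mem_span_singleton_self v)

theorem starProjection_span_image_Icc_eq_zero {X : Type*} [NormedAddCommGroup X]
    [InnerProductSpace ℝ X] {φ : ℕ → X} {r s k : ℕ}
    [(Submodule.span ℝ (φ '' Set.Icc 1 r)).HasOrthogonalProjection]
    (hφ : ∀ k ∈ Icc 1 s, ∀ l ∈ Icc 1 s, ⟪φ k, φ l⟫ = if k = l then 1 else 0)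
    (hk : k ∈ Icc (r + 1) s) : (Submodule.span ℝ (φ '' Set.Icc 1 r)).starProjection (φ k) = 0 := by
  refine Submodule.starProjection_span_eq_zero ?_
  rintro _ ⟨l, hl, rfl⟩
  simp only [Set.mem_Icc, mem_Icc] at hl hk
  rw [hφ l (mem_Icc.mpr ⟨hl.1, by omega⟩) k (mem_Icc.mpr ⟨by omega, hk.2⟩), if_neg (by omega)]

theorem stmt_4_general
    {X : Type*} [NormedAddCommGroup X] [InnerProductSpace ℝ X]
    (T : ℝ) (hT : 0 < T) (N : ℕ) (hN : 2 ≤ N)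
    (dt : ℝ) (hdt : dt = T / ((N : ℝ) - 1))
    (u w : ℕ → X) (γ : ℕ → ℝ)
    (hw1 : w 1 = u 1)
    (hwj : ∀ j ∈ Finset.Icc 1 (N - 1), w (j + 1) = fdiff dt u j)
    (hγ1 : γ 1 = 1) (hγj : ∀ j ∈ Finset.Icc 2 N, γ j = dt)
    (s : ℕ) (lam : ℕ → ℝ) (φ : ℕ → X) (f : ℕ → ℕ → ℝ)
    (hlam : ∀ k ∈ Finset.Icc 1 s, 0 < lam k)
    (hφ : ∀ k ∈ Finset.Icc 1 s, ∀ l ∈ Finset.Icc 1 s,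
      ⟪φ k, φ l⟫ = if k = l then 1 else 0)
    (hf : ∀ k ∈ Finset.Icc 1 s, ∀ l ∈ Finset.Icc 1 s,
      (∑ j ∈ Finset.Icc 1 N, γ j * f k j * f l j) = if k = l then 1 else 0)
    (hsvd : ∀ j ∈ Finset.Icc 1 N,
      w j = ∑ k ∈ Finset.Icc 1 s, (Real.sqrt (lam k) * f k j) • φ k)
    (r : ℕ)
    (Pr : X → X)
    (hPrmem : ∀ x, Pr x ∈ Submodule.span ℝ (φ '' Set.Icc 1 r))
    (hProrth : ∀ x, ∀ v ∈ Submodule.span ℝ (φ '' Set.Icc 1 r),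
      ⟪x - Pr x, v⟫ = 0)
    (ipY : X →ₗ[ℝ] X →ₗ[ℝ] ℝ)
    (hYpos : ∀ x : X, x ≠ 0 → 0 < ipY x x)
    (π : X →ₗ[ℝ] X)
    (hππ : ∀ x, π (π x) = π x)
    (hπrange : LinearMap.range π = Submodule.span ℝ (φ '' Set.Icc 1 r)) :
    (∀ j ∈ Finset.Icc 1 N,
      ‖u j - Pr (u j)‖ ^ 2 ≤ 2 * max T 1 * ∑ k ∈ Finset.Icc (r + 1) s, lam k)
    ∧ (∀ j ∈ Finset.Icc 1 N,
      ipY (u j - Pr (u j)) (u j - Pr (u j))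
        ≤ 2 * max T 1 * ∑ k ∈ Finset.Icc (r + 1) s, lam k * ipY (φ k) (φ k))
    ∧ (∀ j ∈ Finset.Icc 1 N,
      ipY (u j - π (u j)) (u j - π (u j))
        ≤ 2 * max T 1 *
          ∑ k ∈ Finset.Icc (r + 1) s, lam k * ipY (φ k - π (φ k)) (φ k - π (φ k))) := by
  set V := Submodule.span ℝ (φ '' Set.Icc 1 r)
  have : FiniteDimensional ℝ V := .span_of_finite ℝ ((Set.finite_Icc 1 r).image φ)
  have hPr : ∀ x, Pr x = V.starProjection x := fun x =>
    (Submodule.eq_starProjection_of_mem_of_inner_eq_zero (hPrmem x) (hProrth x)).symm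
  have hφV : ∀ k ∈ Icc 1 r, φ k ∈ V := fun k hk =>
    Submodule.subset_span ⟨k, by simpa using hk, rfl⟩
  have hPrφ : ∀ k ∈ Icc 1 r,
      (LinearMap.id - V.starProjection.toLinearMap : X →ₗ[ℝ] X) (φ k) = 0 :=
    fun k hk => by simp [Submodule.starProjection_eq_self_iff.mpr (hφV k hk)]
  have hπφ : ∀ k ∈ Icc 1 r, (LinearMap.id - π : X →ₗ[ℝ] X) (φ k) = 0 := fun k hk =>
    ((LinearMap.IsIdempotentElem.range_eq_ker (LinearMap.ext hππ)).le (hπrange ▸ hφV k hk))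
  have hYnonneg : ∀ x, 0 ≤ ipY x x := fun x =>
    (eq_or_ne x 0).elim (fun hx => by simp [hx]) fun hx => (hYpos x hx).le
  have bound := apply_self_map_le_of_dq_pod (Y := X) hT hN hdt hw1 hwj hγ1 hγj
    (fun k hk => (hlam k hk).le) hf hsvd
  have hPr_bound : ∀ B : BilinForm ℝ X, (∀ x, 0 ≤ B x x) → ∀ j ∈ Icc 1 N,
      B (u j - Pr (u j)) (u j - Pr (u j)) ≤
        2 * max T 1 * ∑ k ∈ Icc (r + 1) s, lam k * B (φ k) (φ k) := fun B hB j hj => by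
    have h := bound B hB _ hPrφ j hj
    simp only [LinearMap.sub_apply, LinearMap.id_apply, ContinuousLinearMap.coe_coe, ← hPr] at h
    refine h.trans_eq (congrArg _ (sum_congr rfl fun k hk => ?_))
    rw [hPr, starProjection_span_image_Icc_eq_zero hφ hk, sub_zero]
  refine ⟨fun j hj => ?_, hPr_bound ipY hYnonneg, bound ipY hYnonneg (LinearMap.id - π) hπφ⟩
  have h := hPr_bound (innerₗ X) (fun _ => real_inner_self_nonneg) j hj
  rw [innerₗ_apply_apply, real_inner_self_eq_norm_sq] at h
  refine h.trans_eq (congrArg _ (sum_congr rfl fun k hk => ?_))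
  have hk' : k ∈ Icc 1 s := by simp only [mem_Icc] at hk ⊢; omega
  rw [innerₗ_apply_apply, hφ k hk' k hk', if_pos rfl, mul_one]

theorem stmt_4
    {X : Type*} [NormedAddCommGroup X] [InnerProductSpace ℝ X] [CompleteSpace X]
    (T : ℝ) (hT : 0 < T) (N : ℕ) (hN : 2 ≤ N)
    (dt : ℝ) (hdt : dt = T / ((N : ℝ) - 1))
    (u w : ℕ → X) (γ : ℕ → ℝ)
    (hw1 : w 1 = u 1)
    (hwj : ∀ j ∈ Finset.Icc 1 (N - 1), w (j + 1) = fdiff dt u j)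
    (hγ1 : γ 1 = 1) (hγj : ∀ j ∈ Finset.Icc 2 N, γ j = dt)
    (s : ℕ) (lam : ℕ → ℝ) (φ : ℕ → X) (f : ℕ → ℕ → ℝ)
    (hlam : ∀ k ∈ Finset.Icc 1 s, 0 < lam k)
    (hφ : ∀ k ∈ Finset.Icc 1 s, ∀ l ∈ Finset.Icc 1 s,
      ⟪φ k, φ l⟫ = if k = l then 1 else 0)
    (hf : ∀ k ∈ Finset.Icc 1 s, ∀ l ∈ Finset.Icc 1 s,
      (∑ j ∈ Finset.Icc 1 N, γ j * f k j * f l j) = if k = l then 1 else 0)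
    (hsvd : ∀ j ∈ Finset.Icc 1 N,
      w j = ∑ k ∈ Finset.Icc 1 s, (Real.sqrt (lam k) * f k j) • φ k)
    (r : ℕ) (hr1 : 1 ≤ r) (hrs : r ≤ s)
    (Pr : X → X)
    (hPrmem : ∀ x, Pr x ∈ Submodule.span ℝ (φ '' Set.Icc 1 r))
    (hProrth : ∀ x, ∀ v ∈ Submodule.span ℝ (φ '' Set.Icc 1 r),
      ⟪x - Pr x, v⟫ = 0)
    (ipY : X →ₗ[ℝ] X →ₗ[ℝ] ℝ)
    (hYsymm : ∀ x y, ipY x y = ipY y x)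
    (hYpos : ∀ x : X, x ≠ 0 → 0 < ipY x x)
    (π : X →ₗ[ℝ] X)
    (hππ : ∀ x, π (π x) = π x)
    (hπrange : LinearMap.range π = Submodule.span ℝ (φ '' Set.Icc 1 r)) :
    (∀ j ∈ Finset.Icc 1 N,
      ‖u j - Pr (u j)‖ ^ 2 ≤ 2 * max T 1 * ∑ k ∈ Finset.Icc (r + 1) s, lam k)
    ∧ (∀ j ∈ Finset.Icc 1 N,
      ipY (u j - Pr (u j)) (u j - Pr (u j))
        ≤ 2 * max T 1 * ∑ k ∈ Finset.Icc (r + 1) s, lam k * ipY (φ k) (φ k))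
    ∧ (∀ j ∈ Finset.Icc 1 N,
      ipY (u j - π (u j)) (u j - π (u j))
        ≤ 2 * max T 1 *
          ∑ k ∈ Finset.Icc (r + 1) s, lam k * ipY (φ k - π (φ k)) (φ k - π (φ k))) :=
  stmt_4_general T hT N hN dt hdt u w γ hw1 hwj hγ1 hγj s lam φ f hlam hφ hf hsvd r Pr hPrmem
    hProrth ipY hYpos π hππ hπrange
end

section
/- (Weighted sum data error bounds for the DQ POD operator K₁.) Let T > 0, N ≥ 2, Δt = T/(N−1), and u^1,…,u^N ∈ X. Suppose the POD decomposition hypothesis holds for the DQ data set w^1 = u^1 and w^{j+1} = ∂u^j (j = 1,…,N−1) with weights γ_1 = 1 and γ_j = Δt for j = 2,…,N, with POD eigenvalues λ_k^{DQ1}, modes φ_k, and rank s. Then with C = 4 max{T², T}: (i) Σ_{j=1}^N Δt ‖u^j − Π_r^X u^j‖_X² ≤ C Σ_{k=r+1}^s λ_k^{DQ1}; (ii) if (·,·)_Y is a second inner product on X then Σ_{j=1}^N Δt ‖u^j − Π_r^X u^j‖_Y² ≤ C Σ_{k=r+1}^s λ_k^{DQ1} ‖φ_k‖_Y²; (iii)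 if in addition π_r : X → X is a linear projection onto X_r (π_r∘π_r = π_r, range(π_r) = X_r), then Σ_{j=1}^N Δt ‖u^j − π_r u^j‖_Y² ≤ C Σ_{k=r+1}^s λ_k^{DQ1} ‖φ_k − π_r φ_k‖_Y². -/
/-!
Summing the difference quotients back gives `u j = ∑ i ∈ Icc 1 j, γ i • w i`. For a positive
semidefinite form `Q`, the weighted Cauchy–Schwarz inequality
`Q (∑ cᵢ xᵢ) (∑ cᵢ xᵢ) ≤ (∑ cᵢ) (∑ cᵢ Q xᵢ xᵢ)` and the `γ`-orthonormality of the time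
coefficients give `Q (u j) (u j) ≤ (1 + T) ∑ₖ λₖ Q φₖ φₖ`; summing over `j` with `N dt ≤ 2T` gives
the constant `2T (1 + T) ≤ 4 max (T², T)`. Each of the three estimates is this bound for the form
`Q (L ·) (L ·)`, where `L = id - Pr` or `L = id - π` annihilates `φ 1, …, φ r`.
-/

open Finset RealInnerProductSpace

namespace LinearMap

section Ordered

variable {𝕜 M : Type*} [Field 𝕜] [LinearOrder 𝕜] [IsStrictOrderedRing 𝕜]
  [AddCommGroup M] [Module 𝕜 M] {Q : M →ₗ[𝕜] M →ₗ[𝕜] 𝕜}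

theorem IsPosSemidef.two_mul_apply_le (hQ : Q.IsPosSemidef) (x y : M) :
    2 * Q x y ≤ Q x x + Q y y := by
  have h := hQ.isNonneg.nonneg (x - y)
  have hsymm : Q y x = Q x y := (hQ.isSymm.eq x y).symm
  simp only [map_sub, sub_apply] at h
  linarith

theorem IsPosSemidef.apply_sum_smul_le (hQ : Q.IsPosSemidef) {ι : Type*} (t : Finset ι)
    {c : ι → 𝕜} (hc : ∀ i ∈ t, 0 ≤ c i) (x : ι → M) :
    Q (∑ i ∈ t, c i • x i) (∑ i ∈ t, c i • x i)
      ≤ (∑ i ∈ t, c i) * ∑ i ∈ t, c i * Q (x i) (x i) := by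
  have hexp : Q (∑ i ∈ t, c i • x i) (∑ i ∈ t, c i • x i)
      = ∑ i ∈ t, ∑ j ∈ t, c i * c j * Q (x i) (x j) := by
    simp only [map_sum, map_smul, sum_apply, smul_apply, smul_eq_mul, mul_sum]
    rw [sum_comm]
    exact sum_congr rfl fun i _ => sum_congr rfl fun j _ => by ring
  have key : 2 * ∑ i ∈ t, ∑ j ∈ t, c i * c j * Q (x i) (x j)
      ≤ 2 * ((∑ i ∈ t, c i) * ∑ i ∈ t, c i * Q (x i) (x i)) := by
    calc 2 * ∑ i ∈ t, ∑ j ∈ t, c i * c j * Q (x i) (x j)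
        = ∑ i ∈ t, ∑ j ∈ t, c i * c j * (2 * Q (x i) (x j)) := by
          simp only [mul_sum]; exact sum_congr rfl fun i _ => sum_congr rfl fun j _ => by ring
      _ ≤ ∑ i ∈ t, ∑ j ∈ t, c i * c j * (Q (x i) (x i) + Q (x j) (x j)) := by
          gcongr with i hi j hj
          · exact mul_nonneg (hc i hi) (hc j hj)
          · exact hQ.two_mul_apply_le _ _
      _ = (∑ i ∈ t, c i * Q (x i) (x i)) * (∑ j ∈ t, c j)
            + (∑ i ∈ t, c i) * ∑ j ∈ t, c j * Q (x j) (x j) := by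
          simp only [sum_mul_sum, ← sum_add_distrib]
          exact sum_congr rfl fun i _ => sum_congr rfl fun j _ => by ring
      _ = 2 * ((∑ i ∈ t, c i) * ∑ i ∈ t, c i * Q (x i) (x i)) := by ring
  rw [hexp]
  linarith

end Ordered

theorem IsPosSemidef.compl₁₂_self {R M N : Type*} [CommSemiring R] [LE R] [AddCommMonoid M]
    [Module R M] [AddCommMonoid N] [Module R N] {Q : N →ₗ[R] N →ₗ[R] R}
    (hQ : Q.IsPosSemidef) (L : M →ₗ[R] N) : (Q.compl₁₂ L L).IsPosSemidef where
  isSymm := ⟨fun x y => hQ.isSymm.eq (L x) (L y)⟩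
  isNonneg := ⟨fun x => hQ.isNonneg.nonneg (L x)⟩

theorem sum_mul_apply_sum_smul_of_orthonormal {R M ι κ : Type*} [CommRing R] [AddCommGroup M]
    [Module R M] [DecidableEq κ] (Q : M →ₗ[R] M →ₗ[R] R) (I : Finset ι) (K : Finset κ)
    (γ : ι → R) (f : κ → ι → R)
    (hf : ∀ k ∈ K, ∀ l ∈ K, ∑ i ∈ I, γ i * f k i * f l i = if k = l then 1 else 0)
    (a : κ → R) (φ : κ → M) :
    ∑ i ∈ I, γ i * Q (∑ k ∈ K, (a k * f k i) • φ k) (∑ k ∈ K, (a k * f k i) • φ k)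
      = ∑ k ∈ K, a k ^ 2 * Q (φ k) (φ k) := by
  calc ∑ i ∈ I, γ i * Q (∑ k ∈ K, (a k * f k i) • φ k) (∑ k ∈ K, (a k * f k i) • φ k)
      = ∑ k ∈ K, ∑ l ∈ K, (∑ i ∈ I, γ i * f k i * f l i) * (a k * a l * Q (φ l) (φ k)) := by
        simp only [map_sum, map_smul, sum_apply, smul_apply, smul_eq_mul, mul_sum, sum_mul]
        rw [sum_comm]
        refine sum_congr rfl fun k _ => ?_
        rw [sum_comm]
        exact sum_congr rfl fun l _ => sum_congr rfl fun i _ => by ring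
    _ = ∑ k ∈ K, a k ^ 2 * Q (φ k) (φ k) := by
        refine sum_congr rfl fun k hk => ?_
        rw [sum_congr rfl fun l hl => by rw [hf k hk l hl]]
        simp [hk, sq]

end LinearMap

theorem sum_Icc_one_eq_sum_Icc_add_one_of_eq_zero {M : Type*} [AddCommMonoid M] {g : ℕ → M}
    {r : ℕ} (hg : ∀ k ∈ Icc 1 r, g k = 0) (s : ℕ) :
    ∑ k ∈ Icc 1 s, g k = ∑ k ∈ Icc (r + 1) s, g k :=
  (sum_subset (Icc_subset_Icc_left (by omega)) fun k hk hk' =>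
    hg k (by simp only [mem_Icc] at hk hk' ⊢; omega)).symm

theorem mem_orthogonal_span_image_Icc {E : Type*} [NormedAddCommGroup E] [InnerProductSpace ℝ E]
    {φ : ℕ → E} {s : ℕ} (hφ : ∀ k ∈ Icc 1 s, ∀ l ∈ Icc 1 s, ⟪φ k, φ l⟫ = if k = l then 1 else 0)
    {r k : ℕ} (hk : k ∈ Icc (r + 1) s) : φ k ∈ (Submodule.span ℝ (φ '' Set.Icc 1 r))ᗮ := by
  refine Submodule.isOrtho_iff_le.mp (Submodule.isOrtho_span.mpr ?_)
    (Submodule.mem_span_singleton_self (φ k))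
  rintro _ rfl _ ⟨l, hl, rfl⟩
  simp only [mem_Icc, Set.mem_Icc] at hk hl
  rw [hφ k (by simp; omega) l (by simp; omega), if_neg (by omega)]

/-- A POD decomposition (eigenvalues `lam`, modes `φ`, time coefficients `f`) of the DQ data set
`w` of `u`, for the weights `γ`; the modes are not required to be orthonormal. -/
structure IsDQPOD {X : Type*} [AddCommGroup X] [Module ℝ X] (dt : ℝ) (N : ℕ) (u w : ℕ → X)
    (γ : ℕ → ℝ) (s : ℕ) (lam : ℕ → ℝ) (φ : ℕ → X) (f : ℕ → ℕ → ℝ) : Prop where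
  w_one : w 1 = u 1
  w_succ : ∀ j ∈ Icc 1 (N - 1), w (j + 1) = fdiff dt u j
  γ_one : γ 1 = 1
  γ_eq : ∀ j ∈ Icc 2 N, γ j = dt
  lam_nonneg : ∀ k ∈ Icc 1 s, 0 ≤ lam k
  f_orthonormal : ∀ k ∈ Icc 1 s, ∀ l ∈ Icc 1 s,
    ∑ j ∈ Icc 1 N, γ j * f k j * f l j = if k = l then 1 else 0
  w_eq_sum : ∀ j ∈ Icc 1 N, w j = ∑ k ∈ Icc 1 s, (Real.sqrt (lam k) * f k j) • φ k

namespace IsDQPOD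

section Module

variable {X : Type*} [AddCommGroup X] [Module ℝ X] {dt : ℝ} {N : ℕ} {u w : ℕ → X} {γ : ℕ → ℝ}
  {s : ℕ} {lam : ℕ → ℝ} {φ : ℕ → X} {f : ℕ → ℕ → ℝ}

theorem eq_sum_Icc_smul (h : IsDQPOD dt N u w γ s lam φ f) (hdt : dt ≠ 0) {j : ℕ}
    (hj : j ∈ Icc 1 N) : u j = ∑ i ∈ Icc 1 j, γ i • w i := by
  obtain ⟨hj1, hjN⟩ := mem_Icc.mp hj
  induction j, hj1 using Nat.le_induction with
  | base => simp [h.γ_one, h.w_one]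
  | succ j hj1 ih =>
    rw [sum_Icc_succ_top (by omega), ← ih (by simp; omega) (by omega),
      h.γ_eq (j + 1) (by simp; omega), h.w_succ j (by simp; omega), fdiff, smul_smul,
      mul_inv_cancel₀ hdt, one_smul, add_sub_cancel]

theorem γ_nonneg (h : IsDQPOD dt N u w γ s lam φ f) (hdt : 0 ≤ dt) :
    ∀ i ∈ Icc 1 N, 0 ≤ γ i := by
  intro i hi
  rcases eq_or_ne i 1 with rfl | hi1
  · simp [h.γ_one]
  · rw [h.γ_eq i (by simp at hi ⊢; omega)]; exact hdt

theorem sum_γ (h : IsDQPOD dt N u w γ s lam φ f) (hN : 1 ≤ N) :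
    ∑ i ∈ Icc 1 N, γ i = 1 + ((N : ℝ) - 1) * dt := by
  have hIcc : Icc 1 N = insert 1 (Icc 2 N) := (insert_Icc_add_one_left_eq_Icc hN).symm
  rw [hIcc, sum_insert (by simp), h.γ_one, sum_congr rfl h.γ_eq, sum_const, Nat.card_Icc,
    nsmul_eq_mul, show N + 1 - 2 = N - 1 by omega, Nat.cast_sub hN, Nat.cast_one]

theorem sum_γ_mul_apply (h : IsDQPOD dt N u w γ s lam φ f) (Q : X →ₗ[ℝ] X →ₗ[ℝ] ℝ) :
    ∑ i ∈ Icc 1 N, γ i * Q (w i) (w i) = ∑ k ∈ Icc 1 s, lam k * Q (φ k) (φ k) := by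
  rw [sum_congr rfl fun i hi => by rw [h.w_eq_sum i hi],
    LinearMap.sum_mul_apply_sum_smul_of_orthonormal Q _ _ γ f h.f_orthonormal]
  exact sum_congr rfl fun k hk => by rw [Real.sq_sqrt (h.lam_nonneg k hk)]

theorem apply_le (h : IsDQPOD dt N u w γ s lam φ f) {Q : X →ₗ[ℝ] X →ₗ[ℝ] ℝ}
    (hQ : Q.IsPosSemidef) (hdt : 0 < dt) {j : ℕ} (hj : j ∈ Icc 1 N) :
    Q (u j) (u j) ≤ (1 + ((N : ℝ) - 1) * dt) * ∑ k ∈ Icc 1 s, lam k * Q (φ k) (φ k) := by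
  have hsub : Icc 1 j ⊆ Icc 1 N := Icc_subset_Icc_right (mem_Icc.mp hj).2
  have hγ := h.γ_nonneg hdt.le
  have hγQ : ∀ i ∈ Icc 1 N, 0 ≤ γ i * Q (w i) (w i) := fun i hi =>
    mul_nonneg (hγ i hi) (hQ.isNonneg.nonneg _)
  rw [h.eq_sum_Icc_smul hdt.ne' hj, ← h.sum_γ ((mem_Icc.mp hj).1.trans (mem_Icc.mp hj).2),
    ← h.sum_γ_mul_apply]
  calc _ ≤ (∑ i ∈ Icc 1 j, γ i) * ∑ i ∈ Icc 1 j, γ i * Q (w i) (w i) :=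
        hQ.apply_sum_smul_le _ (fun i hi => hγ i (hsub hi)) w
    _ ≤ _ := mul_le_mul (sum_le_sum_of_subset_of_nonneg hsub fun i hi _ => hγ i hi)
        (sum_le_sum_of_subset_of_nonneg hsub fun i hi _ => hγQ i hi)
        (sum_nonneg fun i hi => hγQ i (hsub hi)) (sum_nonneg hγ)

theorem sum_mul_apply_le (h : IsDQPOD dt N u w γ s lam φ f) {Q : X →ₗ[ℝ] X →ₗ[ℝ] ℝ}
    (hQ : Q.IsPosSemidef) {T : ℝ} (hT : 0 < T) (hN : 2 ≤ N) (hdt : dt = T / ((N : ℝ) - 1)) :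
    ∑ j ∈ Icc 1 N, dt * Q (u j) (u j)
      ≤ 4 * max (T ^ 2) T * ∑ k ∈ Icc 1 s, lam k * Q (φ k) (φ k) := by
  set S := ∑ k ∈ Icc 1 s, lam k * Q (φ k) (φ k)
  have hN2 : (2 : ℝ) ≤ N := by exact_mod_cast hN
  have hTdt : ((N : ℝ) - 1) * dt = T := by rw [hdt]; field_simp [show (N : ℝ) - 1 ≠ 0 by linarith]
  have hdt_pos : 0 < dt := by rw [hdt]; exact div_pos hT (by linarith)
  have hS : ∑ i ∈ Icc 1 N, γ i * Q (w i) (w i) = S := h.sum_γ_mul_apply Q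
  have hS_nonneg : 0 ≤ S := hS ▸
    sum_nonneg fun i hi => mul_nonneg (h.γ_nonneg hdt_pos.le i hi) (hQ.isNonneg.nonneg _)
  have hNdt : N * dt ≤ 2 * T := by nlinarith [mul_nonneg (sub_nonneg.2 hN2) hdt_pos.le]
  calc ∑ j ∈ Icc 1 N, dt * Q (u j) (u j)
      ≤ ∑ j ∈ Icc 1 N, dt * ((1 + T) * S) := sum_le_sum fun j hj =>
        mul_le_mul_of_nonneg_left (hTdt ▸ h.apply_le hQ hdt_pos hj) hdt_pos.le
    _ = N * dt * (1 + T) * S := by simp [sum_const]; ring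
    _ ≤ 2 * T * (1 + T) * S := by gcongr
    _ ≤ 4 * max (T ^ 2) T * S := by
        refine mul_le_mul_of_nonneg_right ?_ hS_nonneg
        nlinarith [le_max_left (T ^ 2) T, le_max_right (T ^ 2) T]

theorem sum_mul_apply_map_le (h : IsDQPOD dt N u w γ s lam φ f) {Q : X →ₗ[ℝ] X →ₗ[ℝ] ℝ}
    (hQ : Q.IsPosSemidef) {T : ℝ} (hT : 0 < T) (hN : 2 ≤ N) (hdt : dt = T / ((N : ℝ) - 1))
    {r : ℕ} {L : X →ₗ[ℝ] X} (hL : ∀ k ∈ Icc 1 r, L (φ k) = 0) :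
    ∑ j ∈ Icc 1 N, dt * Q (L (u j)) (L (u j))
      ≤ 4 * max (T ^ 2) T * ∑ k ∈ Icc (r + 1) s, lam k * Q (L (φ k)) (L (φ k)) :=
  (h.sum_mul_apply_le (hQ.compl₁₂_self L) hT hN hdt).trans_eq <| congrArg _ <|
    sum_Icc_one_eq_sum_Icc_add_one_of_eq_zero (fun k hk => by simp [hL k hk]) s

end Module

theorem sum_mul_apply_sub_le {X : Type*} [NormedAddCommGroup X] [InnerProductSpace ℝ X]
    {dt : ℝ} {N : ℕ} {u w : ℕ → X} {γ : ℕ → ℝ} {s : ℕ} {lam : ℕ → ℝ} {φ : ℕ → X}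
    {f : ℕ → ℕ → ℝ} (h : IsDQPOD dt N u w γ s lam φ f)
    (hφ : ∀ k ∈ Icc 1 s, ∀ l ∈ Icc 1 s, ⟪φ k, φ l⟫ = if k = l then 1 else 0)
    {Q : X →ₗ[ℝ] X →ₗ[ℝ] ℝ} (hQ : Q.IsPosSemidef) {T : ℝ} (hT : 0 < T) (hN : 2 ≤ N)
    (hdt : dt = T / ((N : ℝ) - 1)) {r : ℕ} {Pr : X → X}
    (hPrmem : ∀ x, Pr x ∈ Submodule.span ℝ (φ '' Set.Icc 1 r))
    (hProrth : ∀ x, ∀ v ∈ Submodule.span ℝ (φ '' Set.Icc 1 r), ⟪x - Pr x, v⟫ = 0) :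
    ∑ j ∈ Icc 1 N, dt * Q (u j - Pr (u j)) (u j - Pr (u j))
      ≤ 4 * max (T ^ 2) T * ∑ k ∈ Icc (r + 1) s, lam k * Q (φ k) (φ k) := by
  set K := Submodule.span ℝ (φ '' Set.Icc 1 r)
  have : FiniteDimensional ℝ K := .span_of_finite ℝ ((Set.finite_Icc 1 r).image φ)
  have hPr x : K.starProjection x = Pr x :=
    K.eq_starProjection_of_mem_of_inner_eq_zero (hPrmem x) (hProrth x)
  have hbound := h.sum_mul_apply_map_le hQ hT hN hdt (L := Kᗮ.starProjection) fun k hk =>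
    Submodule.starProjection_orthogonal_apply_eq_zero
      (Submodule.subset_span ⟨k, by simpa using hk, rfl⟩)
  simp only [ContinuousLinearMap.coe_coe, Submodule.starProjection_orthogonal_val, hPr]
    at hbound
  refine hbound.trans_eq (congrArg _ (sum_congr rfl fun k hk => ?_))
  rw [← hPr, K.starProjection_apply_eq_zero_iff.mpr (mem_orthogonal_span_image_Icc hφ hk),
    sub_zero]

end IsDQPOD

theorem stmt_5_general
    {X : Type*} [NormedAddCommGroup X] [InnerProductSpace ℝ X]
    (T : ℝ) (hT : 0 < T) (N : ℕ) (hN : 2 ≤ N)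
    (dt : ℝ) (hdt : dt = T / ((N : ℝ) - 1))
    (u w : ℕ → X) (γ : ℕ → ℝ)
    (hw1 : w 1 = u 1)
    (hwj : ∀ j ∈ Finset.Icc 1 (N - 1), w (j + 1) = fdiff dt u j)
    (hγ1 : γ 1 = 1) (hγj : ∀ j ∈ Finset.Icc 2 N, γ j = dt)
    (s : ℕ) (lam : ℕ → ℝ) (φ : ℕ → X) (f : ℕ → ℕ → ℝ)
    (hlam : ∀ k ∈ Finset.Icc 1 s, 0 < lam k)
    (hφ : ∀ k ∈ Finset.Icc 1 s, ∀ l ∈ Finset.Icc 1 s,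
      ⟪φ k, φ l⟫ = if k = l then 1 else 0)
    (hf : ∀ k ∈ Finset.Icc 1 s, ∀ l ∈ Finset.Icc 1 s,
      (∑ j ∈ Finset.Icc 1 N, γ j * f k j * f l j) = if k = l then 1 else 0)
    (hsvd : ∀ j ∈ Finset.Icc 1 N,
      w j = ∑ k ∈ Finset.Icc 1 s, (Real.sqrt (lam k) * f k j) • φ k)
    (r : ℕ)
    (Pr : X → X)
    (hPrmem : ∀ x, Pr x ∈ Submodule.span ℝ (φ '' Set.Icc 1 r))
    (hProrth : ∀ x, ∀ v ∈ Submodule.span ℝ (φ '' Set.Icc 1 r),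
      ⟪x - Pr x, v⟫ = 0)
    (ipY : X →ₗ[ℝ] X →ₗ[ℝ] ℝ)
    (hYsymm : ∀ x y, ipY x y = ipY y x)
    (hYpos : ∀ x : X, x ≠ 0 → 0 < ipY x x)
    (π : X →ₗ[ℝ] X)
    (hππ : ∀ x, π (π x) = π x)
    (hπrange : LinearMap.range π = Submodule.span ℝ (φ '' Set.Icc 1 r)) :
    (∑ j ∈ Finset.Icc 1 N, dt * ‖u j - Pr (u j)‖ ^ 2
      ≤ 4 * max (T ^ 2) T * ∑ k ∈ Finset.Icc (r + 1) s, lam k)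
    ∧ (∑ j ∈ Finset.Icc 1 N, dt * ipY (u j - Pr (u j)) (u j - Pr (u j))
      ≤ 4 * max (T ^ 2) T * ∑ k ∈ Finset.Icc (r + 1) s, lam k * ipY (φ k) (φ k))
    ∧ (∑ j ∈ Finset.Icc 1 N, dt * ipY (u j - π (u j)) (u j - π (u j))
      ≤ 4 * max (T ^ 2) T *
        ∑ k ∈ Finset.Icc (r + 1) s, lam k * ipY (φ k - π (φ k)) (φ k - π (φ k))) := by
  have hpod : IsDQPOD dt N u w γ s lam φ f :=
    ⟨hw1, hwj, hγ1, hγj, fun k hk => (hlam k hk).le, hf, hsvd⟩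
  have hY : ipY.IsPosSemidef :=
    ⟨⟨hYsymm⟩, ⟨fun x => (eq_or_ne x 0).elim (fun hx => by simp [hx]) fun hx => (hYpos x hx).le⟩⟩
  refine ⟨?_, hpod.sum_mul_apply_sub_le hφ hY hT hN hdt hPrmem hProrth, ?_⟩
  · calc ∑ j ∈ Icc 1 N, dt * ‖u j - Pr (u j)‖ ^ 2
        = ∑ j ∈ Icc 1 N, dt * innerₗ X (u j - Pr (u j)) (u j - Pr (u j)) := by
          simp only [innerₗ_apply_apply, real_inner_self_eq_norm_sq]
      _ ≤ 4 * max (T ^ 2) T * ∑ k ∈ Icc (r + 1) s, lam k * innerₗ X (φ k) (φ k) :=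
          hpod.sum_mul_apply_sub_le hφ isPosSemidef_inner hT hN hdt hPrmem hProrth
      _ = 4 * max (T ^ 2) T * ∑ k ∈ Icc (r + 1) s, lam k := by
          refine congrArg _ (sum_congr rfl fun k hk => ?_)
          rw [innerₗ_apply_apply, hφ k (by simp at hk ⊢; omega) k (by simp at hk ⊢; omega),
            if_pos rfl, mul_one]
  · refine hpod.sum_mul_apply_map_le hY hT hN hdt (L := LinearMap.id - π) fun k hk => ?_
    obtain ⟨y, hy⟩ : φ k ∈ LinearMap.range π :=
      hπrange ▸ Submodule.subset_span ⟨k, by simpa using hk, rfl⟩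
    simp [← hy, hππ]

theorem stmt_5
    {X : Type*} [NormedAddCommGroup X] [InnerProductSpace ℝ X] [CompleteSpace X]
    (T : ℝ) (hT : 0 < T) (N : ℕ) (hN : 2 ≤ N)
    (dt : ℝ) (hdt : dt = T / ((N : ℝ) - 1))
    (u w : ℕ → X) (γ : ℕ → ℝ)
    (hw1 : w 1 = u 1)
    (hwj : ∀ j ∈ Finset.Icc 1 (N - 1), w (j + 1) = fdiff dt u j)
    (hγ1 : γ 1 = 1) (hγj : ∀ j ∈ Finset.Icc 2 N, γ j = dt)
    (s : ℕ) (lam : ℕ → ℝ) (φ : ℕ → X) (f : ℕ → ℕ → ℝ)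
    (hlam : ∀ k ∈ Finset.Icc 1 s, 0 < lam k)
    (hφ : ∀ k ∈ Finset.Icc 1 s, ∀ l ∈ Finset.Icc 1 s,
      ⟪φ k, φ l⟫ = if k = l then 1 else 0)
    (hf : ∀ k ∈ Finset.Icc 1 s, ∀ l ∈ Finset.Icc 1 s,
      (∑ j ∈ Finset.Icc 1 N, γ j * f k j * f l j) = if k = l then 1 else 0)
    (hsvd : ∀ j ∈ Finset.Icc 1 N,
      w j = ∑ k ∈ Finset.Icc 1 s, (Real.sqrt (lam k) * f k j) • φ k)
    (r : ℕ) (hr1 : 1 ≤ r) (hrs : r ≤ s)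
    (Pr : X → X)
    (hPrmem : ∀ x, Pr x ∈ Submodule.span ℝ (φ '' Set.Icc 1 r))
    (hProrth : ∀ x, ∀ v ∈ Submodule.span ℝ (φ '' Set.Icc 1 r),
      ⟪x - Pr x, v⟫ = 0)
    (ipY : X →ₗ[ℝ] X →ₗ[ℝ] ℝ)
    (hYsymm : ∀ x y, ipY x y = ipY y x)
    (hYpos : ∀ x : X, x ≠ 0 → 0 < ipY x x)
    (π : X →ₗ[ℝ] X)
    (hππ : ∀ x, π (π x) = π x)
    (hπrange : LinearMap.range π = Submodule.span ℝ (φ '' Set.Icc 1 r)) :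
    (∑ j ∈ Finset.Icc 1 N, dt * ‖u j - Pr (u j)‖ ^ 2
      ≤ 4 * max (T ^ 2) T * ∑ k ∈ Finset.Icc (r + 1) s, lam k)
    ∧ (∑ j ∈ Finset.Icc 1 N, dt * ipY (u j - Pr (u j)) (u j - Pr (u j))
      ≤ 4 * max (T ^ 2) T * ∑ k ∈ Finset.Icc (r + 1) s, lam k * ipY (φ k) (φ k))
    ∧ (∑ j ∈ Finset.Icc 1 N, dt * ipY (u j - π (u j)) (u j - π (u j))
      ≤ 4 * max (T ^ 2) T *
        ∑ k ∈ Finset.Icc (r + 1) s, lam k * ipY (φ k - π (φ k)) (φ k - π (φ k))) :=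
  stmt_5_general T hT N hN dt hdt u w γ hw1 hwj hγ1 hγj s lam φ f hlam hφ hf hsvd r Pr hPrmem
    hProrth ipY hYsymm hYpos π hππ hπrange
end

section
/- (Pointwise bound for a general sequence via second difference quotients.) Let T > 0, N ≥ 3 an integer, Z a normed space, z^1,…,z^N ∈ Z, and Δt = T/(N−1). Then max_{1≤j≤N} ‖z^j‖_Z² ≤ C₂ ( ‖z^1‖_Z² + ‖∂z^1‖_Z² + Σ_{i=2}^{N−1} Δt ‖∂∂z^i‖_Z² ), where C₂ = 3 max{T³, 1}. -/
open Finset RealInnerProductSpace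

/-! Discrete Taylor expansion: `∂z^k = ∂z^1 + Δt ∑_{i=2}^k ∂∂z^i` and `z^j = z^1 + Δt ∑_{k<j} ∂z^k`,
so `‖z^j‖ ≤ ‖z^1‖ + T (‖∂z^1‖ + M)` with `M = ∑_{i=2}^{N-1} Δt ‖∂∂z^i‖`. Cauchy–Schwarz gives
`M² ≤ T ∑ Δt ‖∂∂z^i‖²`, and `(x + y + w)² ≤ 3 (x² + y² + w²)` finishes. -/

section DifferenceQuotients

variable {Z : Type*}

section Algebraic

variable [AddCommGroup Z] [Module ℝ Z]

theorem fdiff_succ_sub_fdiff (dt : ℝ) (z : ℕ → Z) (i : ℕ) :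
    fdiff dt z (i + 1) - fdiff dt z i = dt • ddq dt z (i + 1) := by
  rcases eq_or_ne dt 0 with rfl | hdt
  · simp [fdiff, ddq]
  simp only [fdiff, ddq, Nat.add_sub_cancel, smul_smul]
  rw [show dt * (dt ^ 2)⁻¹ = dt⁻¹ by field_simp]
  module

theorem succ_sub_eq_smul_fdiff {dt : ℝ} (hdt : dt ≠ 0) (z : ℕ → Z) (i : ℕ) :
    z (i + 1) - z i = dt • fdiff dt z i := by
  rw [fdiff, smul_smul, mul_inv_cancel₀ hdt, one_smul]

end Algebraic

variable [NormedAddCommGroup Z] [NormedSpace ℝ Z]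

theorem norm_fdiff_le {dt : ℝ} (hdt : 0 ≤ dt) (z : ℕ → Z) {k : ℕ} (hk : 1 ≤ k) :
    ‖fdiff dt z k‖ ≤ ‖fdiff dt z 1‖ + ∑ i ∈ Icc 2 k, dt * ‖ddq dt z i‖ := by
  have hdist : dist (fdiff dt z 1) (fdiff dt z k) ≤ ∑ i ∈ Ico 1 k, dt * ‖ddq dt z (i + 1)‖ :=
    dist_le_Ico_sum_of_dist_le hk fun _ _ => by
      rw [dist_comm, dist_eq_norm, fdiff_succ_sub_fdiff, norm_smul, Real.norm_of_nonneg hdt]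
  rw [sum_Ico_add' (fun i => dt * ‖ddq dt z i‖), Ico_add_one_right_eq_Icc, dist_comm,
    dist_eq_norm] at hdist
  linarith [norm_le_norm_add_norm_sub' (fdiff dt z k) (fdiff dt z 1)]

theorem norm_le_of_norm_fdiff_le {dt : ℝ} (hdt : 0 < dt) (z : ℕ → Z) {m : ℕ} (hm : 1 ≤ m)
    {B : ℝ} (hB : ∀ k, 1 ≤ k → k < m → ‖fdiff dt z k‖ ≤ B) :
    ‖z m‖ ≤ ‖z 1‖ + (m - 1) * dt * B := by
  have hdist : dist (z 1) (z m) ≤ ∑ _i ∈ Ico 1 m, dt * B :=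
    dist_le_Ico_sum_of_dist_le hm fun hk hkm => by
      rw [dist_comm, dist_eq_norm, succ_sub_eq_smul_fdiff hdt.ne', norm_smul,
        Real.norm_of_nonneg hdt.le]
      exact mul_le_mul_of_nonneg_left (hB _ hk hkm) hdt.le
  rw [sum_const, Nat.card_Ico, nsmul_eq_mul, Nat.cast_sub hm, Nat.cast_one, ← mul_assoc,
    dist_comm, dist_eq_norm] at hdist
  linarith [norm_le_norm_add_norm_sub' (z m) (z 1)]

end DifferenceQuotients

theorem sq_sum_mul_le_card_mul_sum_mul_sq {ι : Type*} (s : Finset ι) (c : ℝ) (x : ι → ℝ) :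
    (∑ i ∈ s, c * x i) ^ 2 ≤ #s * c * ∑ i ∈ s, c * x i ^ 2 := by
  calc (∑ i ∈ s, c * x i) ^ 2 ≤ #s * ∑ i ∈ s, (c * x i) ^ 2 := sq_sum_le_card_mul_sum_sq
    _ = #s * c * ∑ i ∈ s, c * x i ^ 2 := by
      rw [mul_assoc, mul_sum s (fun i => c * x i ^ 2) c]
      exact congrArg _ (sum_congr rfl fun _ _ => by ring)

theorem sq_le_three_mul_max_mul_of_le_add {T x a b M S : ℝ} (hT : 0 < T) (hx : 0 ≤ x)
    (hxle : x ≤ a + T * (b + M)) (hM : M ^ 2 ≤ T * S) :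
    x ^ 2 ≤ 3 * max (T ^ 3) 1 * (a ^ 2 + b ^ 2 + S) := by
  have hS : 0 ≤ S := nonneg_of_mul_nonneg_right ((sq_nonneg M).trans hM) hT
  have hT2 : T ^ 2 ≤ max (T ^ 3) 1 := by
    rcases le_total T 1 with h | h
    · exact le_max_of_le_right (pow_le_one₀ hT.le h)
    · exact le_max_of_le_left (pow_le_pow_right₀ h (by norm_num))
  have hT3 : T ^ 3 ≤ max (T ^ 3) 1 := le_max_left _ _
  have h1 : (1 : ℝ) ≤ max (T ^ 3) 1 := le_max_right _ _
  calc x ^ 2 ≤ (a + T * b + T * M) ^ 2 := by nlinarith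
    _ ≤ 3 * (a ^ 2 + T ^ 2 * b ^ 2 + T ^ 2 * M ^ 2) := by
      nlinarith [sq_nonneg (a - T * b), sq_nonneg (a - T * M), sq_nonneg (T * b - T * M)]
    _ ≤ 3 * (a ^ 2 + T ^ 2 * b ^ 2 + T ^ 3 * S) := by nlinarith [sq_nonneg T]
    _ ≤ 3 * max (T ^ 3) 1 * (a ^ 2 + b ^ 2 + S) := by nlinarith [sq_nonneg a, sq_nonneg b]

theorem stmt_10
    {Z : Type*} [NormedAddCommGroup Z] [NormedSpace ℝ Z]
    (T : ℝ) (hT : 0 < T) (N : ℕ) (hN : 3 ≤ N)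
    (z : ℕ → Z) (dt : ℝ) (hdt : dt = T / ((N : ℝ) - 1)) :
    ∀ j ∈ Finset.Icc 1 N,
      ‖z j‖ ^ 2 ≤ 3 * max (T ^ 3) 1 *
        (‖z 1‖ ^ 2 + ‖fdiff dt z 1‖ ^ 2
          + ∑ i ∈ Finset.Icc 2 (N - 1), dt * ‖ddq dt z i‖ ^ 2) := by
  intro j hj
  obtain ⟨hj1, hjN⟩ := mem_Icc.1 hj
  have hN' : (3 : ℝ) ≤ N := by exact_mod_cast hN
  have hdt0 : 0 < dt := by rw [hdt]; exact div_pos hT (by linarith)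
  have hTdt : ((N : ℝ) - 1) * dt = T := by
    rw [hdt]; field_simp [show (N : ℝ) - 1 ≠ 0 by linarith]
  set S := ∑ i ∈ Icc 2 (N - 1), dt * ‖ddq dt z i‖ ^ 2
  set M := ∑ i ∈ Icc 2 (N - 1), dt * ‖ddq dt z i‖
  have hM0 : 0 ≤ M := sum_nonneg fun _ _ => by positivity
  have hfdiff : ∀ k, 1 ≤ k → k < j → ‖fdiff dt z k‖ ≤ ‖fdiff dt z 1‖ + M := fun k hk hkj =>
    (norm_fdiff_le hdt0.le z hk).trans <| add_le_add_right (sum_le_sum_of_subset_of_nonneg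
      (Icc_subset_Icc_right (by omega)) fun _ _ _ => by positivity) _
  have hz : ‖z j‖ ≤ ‖z 1‖ + T * (‖fdiff dt z 1‖ + M) := by
    have hj' : (j : ℝ) ≤ N := by exact_mod_cast hjN
    refine (norm_le_of_norm_fdiff_le hdt0 z hj1 hfdiff).trans ?_
    rw [← hTdt]
    gcongr
  have hM : M ^ 2 ≤ T * S := by
    have hcard : (#(Icc 2 (N - 1)) : ℝ) + 1 ≤ N := by
      exact_mod_cast (by simp only [Nat.card_Icc]; omega : #(Icc 2 (N - 1)) + 1 ≤ N)
    refine (sq_sum_mul_le_card_mul_sum_mul_sq _ dt _).trans ?_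
    rw [← hTdt]
    gcongr
    linarith
  exact sq_le_three_mul_max_mul_of_le_add hT (norm_nonneg _) hz hM
end

section
/- (Pointwise bound for forward differences via second difference quotients.) Let T > 0, N ≥ 3 an integer, Z a normed space, z^1,…,z^N ∈ Z, and Δt = T/(N−1). Then max_{1≤j≤N−1} ‖∂z^j‖_Z² ≤ C₃ ( ‖∂z^1‖_Z² + Σ_{i=2}^{N−1} Δt ‖∂∂z^i‖_Z² ), where C₃ = 2 max{T, 1}. -/
open Finset RealInnerProductSpace

/-! Summing the identity `∂z^{i} - ∂z^{i-1} = Δt ∂∂z^i` gives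
`‖∂z^j‖ ≤ ‖∂z^1‖ + Σ_i Δt ‖∂∂z^i‖`. Squaring, `(a + b)² ≤ 2a² + 2b²` and Cauchy–Schwarz bound the
square of the sum by `(N - 2) Δt · Σ_i Δt ‖∂∂z^i‖² ≤ T Σ_i Δt ‖∂∂z^i‖²`. -/

section DifferenceQuotients

variable {Z : Type*}

theorem fdiff_eq_fdiff_one_add_sum_smul_ddq [AddCommGroup Z] [Module ℝ Z]
    {dt : ℝ} (hdt : dt ≠ 0) (z : ℕ → Z) {j : ℕ} (hj : 1 ≤ j) :
    fdiff dt z j = fdiff dt z 1 + ∑ i ∈ Icc 2 j, dt • ddq dt z i := by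
  induction j, hj using Nat.le_induction with
  | base => simp
  | succ n hn ih =>
    rw [sum_Icc_succ_top (by omega), ← add_assoc, ← ih]
    have hscale : dt * (dt ^ 2)⁻¹ = dt⁻¹ := by field_simp
    simp only [fdiff, ddq, Nat.add_sub_cancel, smul_smul, hscale]
    module

theorem norm_fdiff_le_norm_fdiff_one_add_sum [NormedAddCommGroup Z] [NormedSpace ℝ Z]
    {dt : ℝ} (hdt : 0 < dt) (z : ℕ → Z) {j n : ℕ} (hj : 1 ≤ j) (hjn : j ≤ n) :
    ‖fdiff dt z j‖ ≤ ‖fdiff dt z 1‖ + ∑ i ∈ Icc 2 n, dt * ‖ddq dt z i‖ := by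
  rw [fdiff_eq_fdiff_one_add_sum_smul_ddq hdt.ne' z hj]
  grw [norm_add_le, norm_sum_le]
  gcongr ‖fdiff dt z 1‖ + ?_
  calc ∑ i ∈ Icc 2 j, ‖dt • ddq dt z i‖
      = ∑ i ∈ Icc 2 j, dt * ‖ddq dt z i‖ := by simp only [norm_smul, Real.norm_of_nonneg hdt.le]
    _ ≤ ∑ i ∈ Icc 2 n, dt * ‖ddq dt z i‖ :=
      sum_le_sum_of_subset_of_nonneg (Icc_subset_Icc_right hjn) fun _ _ _ => by positivity

end DifferenceQuotients

theorem sq_sum_mul_le_card_mul_mul_sum_mul_sq {ι : Type*} (s : Finset ι) (f : ι → ℝ) (c : ℝ) :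
    (∑ i ∈ s, c * f i) ^ 2 ≤ (#s * c) * ∑ i ∈ s, c * f i ^ 2 :=
  calc (∑ i ∈ s, c * f i) ^ 2 ≤ #s * ∑ i ∈ s, (c * f i) ^ 2 := sq_sum_le_card_mul_sum_sq
    _ = (#s * c) * ∑ i ∈ s, c * f i ^ 2 := by simp only [mul_sum]; ring_nf

theorem card_Icc_two_pred_mul_div_le {T : ℝ} (hT : 0 ≤ T) {N : ℕ} (hN : 2 ≤ N) :
    (#(Icc 2 (N - 1)) : ℝ) * (T / (N - 1)) ≤ T := by
  have hN1 : (0 : ℝ) < N - 1 := by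
    have : (2 : ℝ) ≤ N := by exact_mod_cast hN
    linarith
  have hcard : (#(Icc 2 (N - 1)) : ℝ) ≤ N - 1 := by
    rw [← Nat.cast_pred (by omega)]
    exact_mod_cast (show #(Icc 2 (N - 1)) ≤ N - 1 by rw [Nat.card_Icc]; omega)
  calc (#(Icc 2 (N - 1)) : ℝ) * (T / (N - 1)) ≤ (N - 1) * (T / (N - 1)) := by gcongr
    _ = T := by field_simp

theorem stmt_12
    {Z : Type*} [NormedAddCommGroup Z] [NormedSpace ℝ Z]
    (T : ℝ) (hT : 0 < T) (N : ℕ) (hN : 3 ≤ N)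
    (z : ℕ → Z) (dt : ℝ) (hdt : dt = T / ((N : ℝ) - 1)) :
    ∀ j ∈ Finset.Icc 1 (N - 1),
      ‖fdiff dt z j‖ ^ 2 ≤ 2 * max T 1 *
        (‖fdiff dt z 1‖ ^ 2 + ∑ i ∈ Finset.Icc 2 (N - 1), dt * ‖ddq dt z i‖ ^ 2) := by
  intro j hj
  rw [mem_Icc] at hj
  have hN1 : (0 : ℝ) < N - 1 := by
    have : (3 : ℝ) ≤ N := by exact_mod_cast hN
    linarith
  have hdt_pos : 0 < dt := hdt ▸ div_pos hT hN1
  have hcard : (#(Icc 2 (N - 1)) : ℝ) * dt ≤ T :=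
    hdt ▸ card_Icc_two_pred_mul_div_le hT.le (by omega)
  set a := ‖fdiff dt z 1‖
  set B := ∑ i ∈ Icc 2 (N - 1), dt * ‖ddq dt z i‖
  set S := ∑ i ∈ Icc 2 (N - 1), dt * ‖ddq dt z i‖ ^ 2
  have hS : 0 ≤ S := sum_nonneg fun _ _ => by positivity
  have hB : B ^ 2 ≤ T * S :=
    (sq_sum_mul_le_card_mul_mul_sum_mul_sq _ _ dt).trans (by gcongr)
  calc ‖fdiff dt z j‖ ^ 2 ≤ (a + B) ^ 2 := by
        gcongr
        exact norm_fdiff_le_norm_fdiff_one_add_sum hdt_pos z hj.1 hj.2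
    _ ≤ 2 * (a ^ 2 + B ^ 2) := add_sq_le
    _ ≤ 2 * max T 1 * (a ^ 2 + S) := by
        nlinarith [le_max_left T 1, le_max_right T 1, sq_nonneg a]
end

section
/- (Pointwise data error bounds for the DDQ POD operator K₂.) Let T > 0, N ≥ 3, Δt = T/(N−1), and u^1,…,u^N ∈ X. Suppose the POD decomposition hypothesis holds for the DDQ data set w^1 = u^1, w^2 = ∂u^1, w^{j+1} = ∂∂u^j (j = 2,…,N−1) with weights γ_1 = γ_2 = 1 and γ_j = Δt for j = 3,…,N, with POD eigenvalues λ_k^{DDQ}, modes φ_k, and rank s. Then with C = 3 max{T³, 1}: (i) max_{1≤j≤N} ‖u^j − Π_r^X u^j‖_X² ≤ C Σ_{k=r+1}^s λ_k^{DDQ}; (ii) if (·,·)_Y is a second inner product on X then max_{1≤j≤N} ‖u^j − Π_r^X u^j‖_Y² ≤ C Σ_{k=r+1}^s λ_k^{DDQ} ‖φ_k‖_Y²; (iii) if in addition π_r : X → X is a linear projection onto X_r (π_r∘π_r = π_r, range(π_r) = X_r), then max_{1≤j≤N} ‖u^j − π_r u^j‖_Y² ≤ C Σ_{k=r+1}^s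 λ_k^{DDQ} ‖φ_k − π_r φ_k‖_Y². -/
/-!
Unrolling the difference quotients writes every snapshot as a `Γ`-inner product with the data,
`u j = (b_j, w)_Γ`, for an explicit coefficient vector `b_j` with `‖b_j‖_Γ² ≤ 1 + T² + T³`.
Inserting the POD expansion of `w` gives `u j = ∑ k, √λ_k (b_j, f_k)_Γ φ_k`, and Bessel's
inequality for the `Γ`-orthonormal `f_k` gives `∑ k, (b_j, f_k)_Γ² ≤ ‖b_j‖_Γ²`. Both projections
kill the modes `k ≤ r`, so each error is `∑ k > r, √λ_k (b_j, f_k)_Γ e_k` (with `e_k = φ_k` or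
`φ_k - π φ_k`), and Cauchy–Schwarz for the positive semidefinite form `(·,·)_Y` bounds its square
by `‖b_j‖_Γ² ∑ k > r, λ_k ‖e_k‖_Y²`.
-/

open Finset RealInnerProductSpace

namespace LinearMap.BilinForm

variable {M ι : Type*} [AddCommGroup M] [Module ℝ M] (B : LinearMap.BilinForm ℝ M)

theorem apply_sum_smul_self_le (hpos : ∀ x, 0 ≤ B x x) (hB : B.IsSymm)
    (A : Finset ι) (a b : ι → ℝ) (v : ι → M) :
    B (∑ k ∈ A, (a k * b k) • v k) (∑ k ∈ A, (a k * b k) • v k) ≤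
      (∑ k ∈ A, a k ^ 2 * B (v k) (v k)) * ∑ k ∈ A, b k ^ 2 := by
  have hexpand : ∀ y, B (∑ k ∈ A, (a k * b k) • v k) y = ∑ k ∈ A, a k * B (v k) y * b k :=
    fun y => by
      simp only [map_sum, map_smul, LinearMap.sum_apply, LinearMap.smul_apply, smul_eq_mul]
      exact sum_congr rfl fun k _ => by ring
  set e := ∑ k ∈ A, (a k * b k) • v k
  have hcs :
      B e e * B e e ≤ (∑ k ∈ A, a k ^ 2 * B (v k) (v k)) * (∑ k ∈ A, b k ^ 2) * B e e :=
    calc B e e * B e e = (∑ k ∈ A, a k * B (v k) e * b k) ^ 2 := by rw [← hexpand, sq]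
      _ ≤ (∑ k ∈ A, (a k * B (v k) e) ^ 2) * ∑ k ∈ A, b k ^ 2 := sum_mul_sq_le_sq_mul_sq _ _ _
      _ ≤ (∑ k ∈ A, a k ^ 2 * B (v k) (v k) * B e e) * ∑ k ∈ A, b k ^ 2 := by
          gcongr with k
          rw [mul_pow, mul_assoc]
          exact mul_le_mul_of_nonneg_left
            (B.apply_sq_le_of_symm hpos (isSymm_iff.mp hB) _ _) (sq_nonneg _)
      _ = _ := by rw [← sum_mul]; ring
  rcases (hpos e).eq_or_lt with he | he
  · rw [← he]
    exact mul_nonneg (sum_nonneg fun k _ => mul_nonneg (sq_nonneg _) (hpos _))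
      (sum_nonneg fun k _ => sq_nonneg _)
  · exact le_of_mul_le_mul_right hcs he

theorem apply_sum_sqrt_mul_smul_self_le (hpos : ∀ x, 0 ≤ B x x) (hB : B.IsSymm)
    {A : Finset ι} {c b : ι → ℝ} {C : ℝ} (hc : ∀ k ∈ A, 0 ≤ c k) (hb : ∑ k ∈ A, b k ^ 2 ≤ C)
    (v : ι → M) :
    B (∑ k ∈ A, (√(c k) * b k) • v k) (∑ k ∈ A, (√(c k) * b k) • v k) ≤
      C * ∑ k ∈ A, c k * B (v k) (v k) := by
  calc _ ≤ (∑ k ∈ A, √(c k) ^ 2 * B (v k) (v k)) * ∑ k ∈ A, b k ^ 2 :=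
        B.apply_sum_smul_self_le hpos hB A _ _ v
    _ = (∑ k ∈ A, c k * B (v k) (v k)) * ∑ k ∈ A, b k ^ 2 := by
        rw [sum_congr rfl fun k hk => by rw [Real.sq_sqrt (hc k hk)]]
    _ ≤ _ := by
        rw [mul_comm]
        exact mul_le_mul_of_nonneg_right hb (sum_nonneg fun k hk => mul_nonneg (hc k hk) (hpos _))

theorem sum_sq_apply_le (hpos : ∀ x, 0 ≤ B x x) (hB : B.IsSymm) [DecidableEq ι]
    {A : Finset ι} {e : ι → M} (he : ∀ k ∈ A, ∀ l ∈ A, B (e k) (e l) = if k = l then 1 else 0)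
    (x : M) : ∑ k ∈ A, B x (e k) ^ 2 ≤ B x x := by
  set S := ∑ k ∈ A, B x (e k) • e k
  have hS : ∀ y, B y S = ∑ k ∈ A, B x (e k) * B y (e k) := fun y => by
    simp only [S, map_sum, map_smul, smul_eq_mul]
  have hSe : ∀ l ∈ A, B S (e l) = B x (e l) := by
    intro l hl
    simp only [S, map_sum, map_smul, LinearMap.sum_apply, LinearMap.smul_apply, smul_eq_mul]
    rw [sum_congr rfl fun k hk => by rw [he k hk l hl]]
    simp [hl]
  have hxS : B x S = ∑ k ∈ A, B x (e k) ^ 2 := by simp only [hS, sq]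
  have hSS : B S S = ∑ k ∈ A, B x (e k) ^ 2 := by
    rw [hS]; exact sum_congr rfl fun k hk => by rw [hSe k hk, sq]
  have := hpos (x - S)
  simp only [map_sub, LinearMap.sub_apply, hB.eq S x, hxS, hSS] at this
  linarith

end LinearMap.BilinForm

section Weighted

variable {ι : Type*}

def weightedInner (M : Finset ι) (γ : ι → ℝ) : LinearMap.BilinForm ℝ (ι → ℝ) :=
  LinearMap.mk₂ ℝ (fun g h => ∑ m ∈ M, γ m * g m * h m)
    (fun _ _ _ => by simp only [Pi.add_apply, mul_add, add_mul, sum_add_distrib])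
    (fun _ _ _ => by
      simp only [Pi.smul_apply, smul_eq_mul, mul_sum]; exact sum_congr rfl fun _ _ => by ring)
    (fun _ _ _ => by simp only [Pi.add_apply, mul_add, sum_add_distrib])
    (fun _ _ _ => by
      simp only [Pi.smul_apply, smul_eq_mul, mul_sum]; exact sum_congr rfl fun _ _ => by ring)

theorem weightedInner_apply (M : Finset ι) (γ g h : ι → ℝ) :
    weightedInner M γ g h = ∑ m ∈ M, γ m * g m * h m := rfl

theorem weightedInner_isSymm (M : Finset ι) (γ : ι → ℝ) : (weightedInner M γ).IsSymm :=
  ⟨fun g h => by simp only [weightedInner_apply, mul_right_comm]⟩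

theorem weightedInner_self_nonneg {M : Finset ι} {γ : ι → ℝ} (hγ : ∀ m ∈ M, 0 ≤ γ m)
    (g : ι → ℝ) : 0 ≤ weightedInner M γ g g :=
  sum_nonneg fun m hm => by rw [mul_assoc]; exact mul_nonneg (hγ m hm) (mul_self_nonneg _)

end Weighted

theorem sum_smul_eq_sum_sqrt_mul_weightedInner_smul {ι κ X : Type*} [AddCommGroup X]
    [Module ℝ X] {M : Finset ι} {A : Finset κ} {w : ι → X} {φ : κ → X} {lam : κ → ℝ}
    {f : κ → ι → ℝ} (hw : ∀ m ∈ M, w m = ∑ k ∈ A, (√(lam k) * f k m) • φ k) (γ β : ι → ℝ) :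
    ∑ m ∈ M, (γ m * β m) • w m =
      ∑ k ∈ A, (√(lam k) * weightedInner M γ β (f k)) • φ k := by
  simp_rw [weightedInner_apply, mul_sum, sum_smul]
  rw [sum_congr rfl fun m hm => by rw [hw m hm, smul_sum], sum_comm]
  exact sum_congr rfl fun k _ => sum_congr rfl fun m _ => by rw [smul_smul]; ring_nf

section Projection

variable {X : Type*} [NormedAddCommGroup X] [InnerProductSpace ℝ X] {φ : ℕ → X} {r s : ℕ}

theorem sum_Icc_smul_sub_mem_span (c : ℕ → ℝ) :
    ∑ k ∈ Icc 1 s, c k • φ k - ∑ k ∈ Icc (r + 1) s, c k • φ k ∈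
      Submodule.span ℝ (φ '' Set.Icc 1 r) := by
  rw [← sum_sdiff (s₁ := Icc (r + 1) s) (s₂ := Icc 1 s) (Icc_subset_Icc_left (by omega)),
    add_sub_cancel_right]
  refine Submodule.sum_mem _ fun k hk => Submodule.smul_mem _ _ (Submodule.subset_span ?_)
  simp only [mem_sdiff, mem_Icc] at hk
  exact ⟨k, ⟨hk.1.1, by omega⟩, rfl⟩

theorem sum_Icc_smul_mem_orthogonal_span
    (hφ : ∀ k ∈ Icc 1 s, ∀ l ∈ Icc 1 s, ⟪φ k, φ l⟫ = if k = l then 1 else 0)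
    (hrs : r ≤ s) (c : ℕ → ℝ) :
    ∑ k ∈ Icc (r + 1) s, c k • φ k ∈ (Submodule.span ℝ (φ '' Set.Icc 1 r))ᗮ := by
  have hortho :
      Submodule.span ℝ (φ '' Set.Icc 1 r) ⟂ Submodule.span ℝ (φ '' Set.Icc (r + 1) s) := by
    rw [Submodule.isOrtho_span]
    rintro _ ⟨l, hl, rfl⟩ _ ⟨k, hk, rfl⟩
    rw [Set.mem_Icc] at hl hk
    rw [hφ l (by simp only [mem_Icc]; omega) k (by simp only [mem_Icc]; omega), if_neg (by omega)]
  refine hortho.ge (Submodule.sum_mem _ fun k hk => Submodule.smul_mem _ _ ?_)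
  exact Submodule.subset_span ⟨k, by simpa using hk, rfl⟩

theorem sum_Icc_smul_sub_eq_of_orthogonal
    (hφ : ∀ k ∈ Icc 1 s, ∀ l ∈ Icc 1 s, ⟪φ k, φ l⟫ = if k = l then 1 else 0)
    (hrs : r ≤ s) {P : X → X} (hPmem : ∀ x, P x ∈ Submodule.span ℝ (φ '' Set.Icc 1 r))
    (hPorth : ∀ x, ∀ v ∈ Submodule.span ℝ (φ '' Set.Icc 1 r), ⟪x - P x, v⟫ = 0) (c : ℕ → ℝ) :
    ∑ k ∈ Icc 1 s, c k • φ k - P (∑ k ∈ Icc 1 s, c k • φ k) =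
      ∑ k ∈ Icc (r + 1) s, c k • φ k := by
  set K := Submodule.span ℝ (φ '' Set.Icc 1 r)
  set x := ∑ k ∈ Icc 1 s, c k • φ k
  set e := ∑ k ∈ Icc (r + 1) s, c k • φ k
  have hmem : P x - (x - e) ∈ K := K.sub_mem (hPmem x) (sum_Icc_smul_sub_mem_span c)
  have hperp : P x - (x - e) ∈ Kᗮ := by
    rw [show P x - (x - e) = e - (x - P x) by abel]
    exact Kᗮ.sub_mem (sum_Icc_smul_mem_orthogonal_span hφ hrs c)
      ((K.mem_orthogonal' _).2 (hPorth x))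
  have hzero : P x - (x - e) = 0 := by
    simpa using K.inf_orthogonal_eq_bot.le ⟨hmem, hperp⟩
  rw [sub_eq_zero.mp hzero, sub_sub_cancel]

theorem sum_Icc_smul_sub_eq_of_isIdempotent {π : X →ₗ[ℝ] X} (hππ : ∀ x, π (π x) = π x)
    (hπrange : LinearMap.range π = Submodule.span ℝ (φ '' Set.Icc 1 r)) (c : ℕ → ℝ) :
    ∑ k ∈ Icc 1 s, c k • φ k - π (∑ k ∈ Icc 1 s, c k • φ k) =
      ∑ k ∈ Icc (r + 1) s, c k • (φ k - π (φ k)) := by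
  have hfix : ∀ k ∈ Set.Icc 1 r, π (φ k) = φ k := by
    intro k hk
    obtain ⟨y, hy⟩ : φ k ∈ LinearMap.range π := hπrange ▸ Submodule.subset_span ⟨k, hk, rfl⟩
    rw [← hy, hππ]
  rw [map_sum, ← sum_sub_distrib, sum_congr rfl fun k _ => by rw [map_smul, ← smul_sub]]
  refine (sum_subset (Icc_subset_Icc_left (by omega)) fun k hk hk' => ?_).symm
  simp only [mem_Icc, not_and, not_le] at hk hk'
  rw [hfix k ⟨hk.1, by omega⟩, sub_self, smul_zero]

end Projection

theorem eq_of_second_order_recurrence {X : Type*} [AddCommGroup X] [Module ℝ X]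
    {x y d : ℕ → X} {N : ℕ}
    (hx : ∀ j ∈ Ico 2 N, x (j + 1) = (2 : ℝ) • x j - x (j - 1) + d j)
    (hy : ∀ j ∈ Ico 2 N, y (j + 1) = (2 : ℝ) • y j - y (j - 1) + d j)
    (h1 : x 1 = y 1) (h2 : x 2 = y 2) : ∀ j ∈ Icc 1 N, x j = y j := by
  intro j hj
  induction j using Nat.strong_induction_on with
  | _ j ih =>
    rw [mem_Icc] at hj
    rcases (by omega : j = 1 ∨ j = 2 ∨ 3 ≤ j) with rfl | rfl | h3
    · exact h1
    · exact h2
    · obtain ⟨i, rfl⟩ : ∃ i, j = i + 3 := ⟨j - 3, by omega⟩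
      have hi : i + 2 ∈ Ico 2 N := by simp only [mem_Ico]; omega
      rw [hx _ hi, hy _ hi, show i + 2 - 1 = i + 1 from rfl,
        ih (i + 2) (by omega) (by simp only [mem_Icc]; omega),
        ih (i + 1) (by omega) (by simp only [mem_Icc]; omega)]

/-- The vector `b_j = ddqCoeff Δt j`: unrolling the difference quotients gives
`u j = u 1 + (j - 1) Δt ∂u 1 + Δt² ∑_{m=3}^{j} (j + 1 - m) ∂∂u (m - 1)`,
that is, `u j = ∑ m, γ m * ddqCoeff Δt j m • w m`. -/
def ddqCoeff (dt : ℝ) (j m : ℕ) : ℝ :=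
  if m = 1 then 1 else if m ≤ j then dt * ((j : ℝ) + 1 - m) else 0

theorem ddqCoeff_succ (dt : ℝ) {j : ℕ} (hj : 1 ≤ j) (m : ℕ) :
    ddqCoeff dt (j + 1) m =
      2 * ddqCoeff dt j m - ddqCoeff dt (j - 1) m + if m = j + 1 then dt else 0 := by
  unfold ddqCoeff
  rcases lt_trichotomy m j with h | rfl | h <;> split_ifs <;> subst_vars <;>
    first | omega | (push_cast [Nat.cast_sub hj]; ring)

theorem eq_sum_ddqCoeff_smul {X : Type*} [AddCommGroup X] [Module ℝ X] {N : ℕ} (hN : 3 ≤ N)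
    {dt : ℝ} (hdt : dt ≠ 0) {u w : ℕ → X} {γ : ℕ → ℝ}
    (hw1 : w 1 = u 1) (hw2 : w 2 = fdiff dt u 1)
    (hwj : ∀ j ∈ Icc 2 (N - 1), w (j + 1) = ddq dt u j)
    (hγ1 : γ 1 = 1) (hγ2 : γ 2 = 1) (hγj : ∀ j ∈ Icc 3 N, γ j = dt) :
    ∀ j ∈ Icc 1 N, u j = ∑ m ∈ Icc 1 N, (γ m * ddqCoeff dt j m) • w m := by
  have hu : ∀ j ∈ Ico 2 N, u (j + 1) = (2 : ℝ) • u j - u (j - 1) + (dt ^ 2) • w (j + 1) := by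
    intro j hj
    rw [hwj j (by simp only [mem_Ico, mem_Icc] at hj ⊢; omega), ddq,
      smul_inv_smul₀ (pow_ne_zero 2 hdt)]
    abel
  have hE : ∀ j ∈ Ico 2 N, ∑ m ∈ Icc 1 N, (γ m * ddqCoeff dt (j + 1) m) • w m =
      (2 : ℝ) • ∑ m ∈ Icc 1 N, (γ m * ddqCoeff dt j m) • w m -
        ∑ m ∈ Icc 1 N, (γ m * ddqCoeff dt (j - 1) m) • w m + (dt ^ 2) • w (j + 1) := by
    intro j hj
    simp only [mem_Ico] at hj
    have hdiag :
        (dt ^ 2) • w (j + 1) = ∑ m ∈ Icc 1 N, (γ m * if m = j + 1 then dt else 0) • w m := by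
      rw [sum_eq_single_of_mem (j + 1) (by simp only [mem_Icc]; omega)
        fun m _ hm => by rw [if_neg hm, mul_zero, zero_smul]]
      rw [if_pos rfl, hγj _ (by simp only [mem_Icc]; omega), sq]
    rw [hdiag, smul_sum, ← sum_sub_distrib, ← sum_add_distrib]
    refine sum_congr rfl fun m _ => ?_
    rw [ddqCoeff_succ dt (by omega)]
    module
  refine eq_of_second_order_recurrence
    (y := fun j => ∑ m ∈ Icc 1 N, (γ m * ddqCoeff dt j m) • w m) hu hE ?_ ?_
  · rw [sum_eq_single_of_mem 1 (by simp only [mem_Icc]; omega) fun m hm hm1 => by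
      simp only [mem_Icc] at hm
      rw [ddqCoeff, if_neg hm1, if_neg (by omega), mul_zero, zero_smul]]
    rw [ddqCoeff, if_pos rfl, hγ1, mul_one, one_smul, hw1]
  · rw [← sum_subset (s₁ := {1, 2})
      (by intro m; simp only [mem_insert, mem_singleton, mem_Icc]; omega)
      fun m hm hm12 => by
        simp only [mem_insert, mem_singleton, mem_Icc, not_or] at hm hm12
        rw [ddqCoeff, if_neg hm12.1, if_neg (by omega), mul_zero, zero_smul]]
    rw [sum_pair (by norm_num), hw1, hw2, fdiff, hγ1, hγ2]
    norm_num [ddqCoeff, smul_inv_smul₀ hdt]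

theorem one_add_sq_add_pow_three_le {T : ℝ} (hT : 0 ≤ T) :
    1 + T ^ 2 + T ^ 3 ≤ 3 * max (T ^ 3) 1 := by
  rcases le_total T 1 with h | h
  · have := pow_le_one₀ hT h (n := 2)
    have := pow_le_one₀ hT h (n := 3)
    have := le_max_right (T ^ 3) 1
    linarith
  · have := pow_le_pow_right₀ h (show 2 ≤ 3 by norm_num)
    have := one_le_pow₀ h (n := 3)
    have := le_max_left (T ^ 3) 1
    linarith

theorem weightedInner_ddqCoeff_self_le {N : ℕ} (hN : 3 ≤ N) {T dt : ℝ} (hT : 0 < T)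
    (hdt : dt = T / ((N : ℝ) - 1)) {γ : ℕ → ℝ}
    (hγ1 : γ 1 = 1) (hγ2 : γ 2 = 1) (hγj : ∀ j ∈ Icc 3 N, γ j = dt) {j : ℕ} (hj : j ∈ Icc 1 N) :
    weightedInner (Icc 1 N) γ (ddqCoeff dt j) (ddqCoeff dt j) ≤ 3 * max (T ^ 3) 1 := by
  have hN' : (3 : ℝ) ≤ N := by exact_mod_cast hN
  have hdt0 : 0 < dt := by rw [hdt]; exact div_pos hT (by linarith)
  have hTdt : ((N : ℝ) - 1) * dt = T := by rw [hdt]; field_simp [show (N : ℝ) - 1 ≠ 0 by linarith]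
  rw [mem_Icc] at hj
  have hjN : (j : ℝ) ≤ N := by exact_mod_cast hj.2
  have hcoeff : ∀ m, 2 ≤ m → 0 ≤ ddqCoeff dt j m ∧ ddqCoeff dt j m ≤ T := by
    intro m hm
    have hm' : (2 : ℝ) ≤ m := by exact_mod_cast hm
    rw [ddqCoeff, if_neg (by omega)]
    split_ifs with hmj
    · have : (m : ℝ) ≤ j := by exact_mod_cast hmj
      constructor <;> nlinarith
    · exact ⟨le_rfl, hT.le⟩
  have hsq : ∀ m, 2 ≤ m → ddqCoeff dt j m * ddqCoeff dt j m ≤ T ^ 2 := fun m hm => by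
    rw [sq]; exact mul_self_le_mul_self (hcoeff m hm).1 (hcoeff m hm).2
  have htail : ∑ m ∈ Icc 3 N, γ m * ddqCoeff dt j m * ddqCoeff dt j m ≤ T ^ 3 :=
    calc ∑ m ∈ Icc 3 N, γ m * ddqCoeff dt j m * ddqCoeff dt j m
        ≤ ∑ m ∈ Icc 3 N, dt * T ^ 2 := sum_le_sum fun m hm => by
          rw [hγj m hm, mul_assoc]
          exact mul_le_mul_of_nonneg_left (hsq m (by simp only [mem_Icc] at hm; omega)) hdt0.le
      _ = ((N : ℝ) - 2) * dt * T ^ 2 := by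
          rw [sum_const, Nat.card_Icc, nsmul_eq_mul, mul_assoc, Nat.cast_sub (by omega)]
          push_cast; ring
      _ ≤ T ^ 3 := by rw [← hTdt]; nlinarith [sq_nonneg (((N : ℝ) - 1) * dt)]
  have hsplit : Icc 1 N = insert 1 (insert 2 (Icc 3 N)) := by
    ext m; simp only [mem_insert, mem_Icc]; omega
  rw [weightedInner_apply, hsplit, sum_insert (by simp), sum_insert (by simp), hγ1, hγ2,
    ddqCoeff, if_pos rfl]
  have := hsq 2 le_rfl
  linarith [one_add_sq_add_pow_three_le hT.le]

theorem sum_sq_weightedInner_ddqCoeff_le {N s : ℕ} (hN : 3 ≤ N) {T dt : ℝ} (hT : 0 < T)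
    (hdt : dt = T / ((N : ℝ) - 1)) {γ : ℕ → ℝ}
    (hγ1 : γ 1 = 1) (hγ2 : γ 2 = 1) (hγj : ∀ j ∈ Icc 3 N, γ j = dt) {f : ℕ → ℕ → ℝ}
    (hf : ∀ k ∈ Icc 1 s, ∀ l ∈ Icc 1 s,
      weightedInner (Icc 1 N) γ (f k) (f l) = if k = l then 1 else 0)
    {j : ℕ} (hj : j ∈ Icc 1 N) :
    ∑ k ∈ Icc 1 s, weightedInner (Icc 1 N) γ (ddqCoeff dt j) (f k) ^ 2 ≤ 3 * max (T ^ 3) 1 := by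
  have hdt0 : 0 ≤ dt := by
    rw [hdt]; exact div_nonneg hT.le (by linarith [show (3 : ℝ) ≤ N by exact_mod_cast hN])
  have hγ : ∀ m ∈ Icc 1 N, 0 ≤ γ m := by
    intro m hm
    rw [mem_Icc] at hm
    rcases (by omega : m = 1 ∨ m = 2 ∨ 3 ≤ m) with rfl | rfl | hm3
    · rw [hγ1]; exact zero_le_one
    · rw [hγ2]; exact zero_le_one
    · rw [hγj m (mem_Icc.2 ⟨hm3, hm.2⟩)]; exact hdt0
  exact (LinearMap.BilinForm.sum_sq_apply_le _ (weightedInner_self_nonneg hγ)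
    (weightedInner_isSymm _ _) hf _).trans
    (weightedInner_ddqCoeff_self_le hN hT hdt hγ1 hγ2 hγj hj)

theorem stmt_14_general
    {X : Type*} [NormedAddCommGroup X] [InnerProductSpace ℝ X]
    (T : ℝ) (hT : 0 < T) (N : ℕ) (hN : 3 ≤ N)
    (dt : ℝ) (hdt : dt = T / ((N : ℝ) - 1))
    (u w : ℕ → X) (γ : ℕ → ℝ)
    (hw1 : w 1 = u 1) (hw2 : w 2 = fdiff dt u 1)
    (hwj : ∀ j ∈ Finset.Icc 2 (N - 1), w (j + 1) = ddq dt u j)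
    (hγ1 : γ 1 = 1) (hγ2 : γ 2 = 1) (hγj : ∀ j ∈ Finset.Icc 3 N, γ j = dt)
    (s : ℕ) (lam : ℕ → ℝ) (φ : ℕ → X) (f : ℕ → ℕ → ℝ)
    (hlam : ∀ k ∈ Finset.Icc 1 s, 0 < lam k)
    (hφ : ∀ k ∈ Finset.Icc 1 s, ∀ l ∈ Finset.Icc 1 s,
      ⟪φ k, φ l⟫ = if k = l then 1 else 0)
    (hf : ∀ k ∈ Finset.Icc 1 s, ∀ l ∈ Finset.Icc 1 s,
      (∑ j ∈ Finset.Icc 1 N, γ j * f k j * f l j) = if k = l then 1 else 0)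
    (hsvd : ∀ j ∈ Finset.Icc 1 N,
      w j = ∑ k ∈ Finset.Icc 1 s, (Real.sqrt (lam k) * f k j) • φ k)
    (r : ℕ) (hrs : r ≤ s)
    (Pr : X → X)
    (hPrmem : ∀ x, Pr x ∈ Submodule.span ℝ (φ '' Set.Icc 1 r))
    (hProrth : ∀ x, ∀ v ∈ Submodule.span ℝ (φ '' Set.Icc 1 r),
      ⟪x - Pr x, v⟫ = 0)
    (ipY : X →ₗ[ℝ] X →ₗ[ℝ] ℝ)
    (hYsymm : ∀ x y, ipY x y = ipY y x)
    (hYpos : ∀ x : X, x ≠ 0 → 0 < ipY x x)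
    (π : X →ₗ[ℝ] X)
    (hππ : ∀ x, π (π x) = π x)
    (hπrange : LinearMap.range π = Submodule.span ℝ (φ '' Set.Icc 1 r)) :
    (∀ j ∈ Finset.Icc 1 N,
      ‖u j - Pr (u j)‖ ^ 2 ≤ 3 * max (T ^ 3) 1 * ∑ k ∈ Finset.Icc (r + 1) s, lam k)
    ∧ (∀ j ∈ Finset.Icc 1 N,
      ipY (u j - Pr (u j)) (u j - Pr (u j))
        ≤ 3 * max (T ^ 3) 1 * ∑ k ∈ Finset.Icc (r + 1) s, lam k * ipY (φ k) (φ k))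
    ∧ (∀ j ∈ Finset.Icc 1 N,
      ipY (u j - π (u j)) (u j - π (u j))
        ≤ 3 * max (T ^ 3) 1 *
          ∑ k ∈ Finset.Icc (r + 1) s, lam k * ipY (φ k - π (φ k)) (φ k - π (φ k))) := by
  have hdt0 : dt ≠ 0 := by
    have : (3 : ℝ) ≤ N := by exact_mod_cast hN
    rw [hdt]; exact div_ne_zero hT.ne' (sub_pos.2 (by linarith)).ne'
  have hlam' : ∀ k ∈ Icc (r + 1) s, 0 ≤ lam k := fun k hk =>
    (hlam k (Icc_subset_Icc_left (Nat.le_add_left 1 r) hk)).le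
  have hYnn : ∀ x, 0 ≤ ipY x x := fun x => by
    rcases eq_or_ne x 0 with rfl | hx
    · simp
    · exact (hYpos x hx).le
  set g : ℕ → ℕ → ℝ := fun k j => weightedInner (Icc 1 N) γ (ddqCoeff dt j) (f k)
  have hu : ∀ j ∈ Icc 1 N, u j = ∑ k ∈ Icc 1 s, (√(lam k) * g k j) • φ k := fun j hj =>
    (eq_sum_ddqCoeff_smul hN hdt0 hw1 hw2 hwj hγ1 hγ2 hγj j hj).trans
      (sum_smul_eq_sum_sqrt_mul_weightedInner_smul hsvd γ _)
  have hg : ∀ j ∈ Icc 1 N, ∑ k ∈ Icc (r + 1) s, g k j ^ 2 ≤ 3 * max (T ^ 3) 1 := fun j hj =>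
    (sum_le_sum_of_subset_of_nonneg (Icc_subset_Icc_left (Nat.le_add_left 1 r))
      fun _ _ _ => sq_nonneg _).trans
    (sum_sq_weightedInner_ddqCoeff_le hN hT hdt hγ1 hγ2 hγj hf hj)
  refine ⟨fun j hj => ?_, fun j hj => ?_, fun j hj => ?_⟩
  · rw [hu j hj, sum_Icc_smul_sub_eq_of_orthogonal hφ hrs hPrmem hProrth,
      ← real_inner_self_eq_norm_sq]
    calc _ ≤ _ := LinearMap.BilinForm.apply_sum_sqrt_mul_smul_self_le (innerₗ X)
          (fun _ => real_inner_self_nonneg) ⟨fun x y => real_inner_comm y x⟩ hlam' (hg j hj) φ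
      _ = _ := by
          refine congrArg _ (sum_congr rfl fun k hk => ?_)
          have hk' := Icc_subset_Icc_left (Nat.le_add_left 1 r) hk
          rw [innerₗ_apply_apply, hφ k hk' k hk', if_pos rfl, mul_one]
  · rw [hu j hj, sum_Icc_smul_sub_eq_of_orthogonal hφ hrs hPrmem hProrth]
    exact LinearMap.BilinForm.apply_sum_sqrt_mul_smul_self_le ipY hYnn ⟨hYsymm⟩ hlam' (hg j hj) φ
  · rw [hu j hj, sum_Icc_smul_sub_eq_of_isIdempotent hππ hπrange]
    exact LinearMap.BilinForm.apply_sum_sqrt_mul_smul_self_le ipY hYnn ⟨hYsymm⟩ hlam' (hg j hj) _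

theorem stmt_14
    {X : Type*} [NormedAddCommGroup X] [InnerProductSpace ℝ X] [CompleteSpace X]
    (T : ℝ) (hT : 0 < T) (N : ℕ) (hN : 3 ≤ N)
    (dt : ℝ) (hdt : dt = T / ((N : ℝ) - 1))
    (u w : ℕ → X) (γ : ℕ → ℝ)
    (hw1 : w 1 = u 1) (hw2 : w 2 = fdiff dt u 1)
    (hwj : ∀ j ∈ Finset.Icc 2 (N - 1), w (j + 1) = ddq dt u j)
    (hγ1 : γ 1 = 1) (hγ2 : γ 2 = 1) (hγj : ∀ j ∈ Finset.Icc 3 N, γ j = dt)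
    (s : ℕ) (lam : ℕ → ℝ) (φ : ℕ → X) (f : ℕ → ℕ → ℝ)
    (hlam : ∀ k ∈ Finset.Icc 1 s, 0 < lam k)
    (hφ : ∀ k ∈ Finset.Icc 1 s, ∀ l ∈ Finset.Icc 1 s,
      ⟪φ k, φ l⟫ = if k = l then 1 else 0)
    (hf : ∀ k ∈ Finset.Icc 1 s, ∀ l ∈ Finset.Icc 1 s,
      (∑ j ∈ Finset.Icc 1 N, γ j * f k j * f l j) = if k = l then 1 else 0)
    (hsvd : ∀ j ∈ Finset.Icc 1 N,
      w j = ∑ k ∈ Finset.Icc 1 s, (Real.sqrt (lam k) * f k j) • φ k)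
    (r : ℕ) (hr1 : 1 ≤ r) (hrs : r ≤ s)
    (Pr : X → X)
    (hPrmem : ∀ x, Pr x ∈ Submodule.span ℝ (φ '' Set.Icc 1 r))
    (hProrth : ∀ x, ∀ v ∈ Submodule.span ℝ (φ '' Set.Icc 1 r),
      ⟪x - Pr x, v⟫ = 0)
    (ipY : X →ₗ[ℝ] X →ₗ[ℝ] ℝ)
    (hYsymm : ∀ x y, ipY x y = ipY y x)
    (hYpos : ∀ x : X, x ≠ 0 → 0 < ipY x x)
    (π : X →ₗ[ℝ] X)
    (hππ : ∀ x, π (π x) = π x)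
    (hπrange : LinearMap.range π = Submodule.span ℝ (φ '' Set.Icc 1 r)) :
    (∀ j ∈ Finset.Icc 1 N,
      ‖u j - Pr (u j)‖ ^ 2 ≤ 3 * max (T ^ 3) 1 * ∑ k ∈ Finset.Icc (r + 1) s, lam k)
    ∧ (∀ j ∈ Finset.Icc 1 N,
      ipY (u j - Pr (u j)) (u j - Pr (u j))
        ≤ 3 * max (T ^ 3) 1 * ∑ k ∈ Finset.Icc (r + 1) s, lam k * ipY (φ k) (φ k))
    ∧ (∀ j ∈ Finset.Icc 1 N,
      ipY (u j - π (u j)) (u j - π (u j))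
        ≤ 3 * max (T ^ 3) 1 *
          ∑ k ∈ Finset.Icc (r + 1) s, lam k * ipY (φ k - π (φ k)) (φ k - π (φ k))) :=
  stmt_14_general T hT N hN dt hdt u w γ hw1 hw2 hwj hγ1 hγ2 hγj s lam φ f hlam hφ hf hsvd r hrs Pr
    hPrmem hProrth ipY hYsymm hYpos π hππ hπrange
end

section
/- (Discrete energy dissipation identity for the damped wave scheme.) Let V be a real inner product space with inner product (·,·) and norm ‖·‖, let B : V × V → ℝ be a symmetric bilinear form, let c > 0, D ≥ 0, G ≥ 0, Δt > 0, N ≥ 3, and let u^1,…,u^N ∈ V satisfy the scheme: for all n = 2,…,N−1 and all v ∈ V, (∂∂u^n, v) + c² B(û^n, v) + D (∂ū^n, v) + G B(∂ū^n, v) = 0. Define the discrete energy E(u^n) = (1/2)‖∂⁻u^n‖² + (1/2)c² B(ū^n, ū^n) for n = 2,…,N. Then for every n = 2,…,N−1, ∂E(u^n) := (E(u^{n+1}) − E(u^n))/Δt = −D ‖∂ū^n‖² − G B(∂ū^n, ∂ū^n). -/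
open Finset RealInnerProductSpace

/-!
Test the scheme at step `n` with `v = ∂ū^n`. Since `∂∂u^n = (∂⁻u^{n+1} - ∂⁻u^n)/Δt` and
`∂ū^n = (∂⁻u^{n+1} + ∂⁻u^n)/2`, the inertial term is `(‖∂⁻u^{n+1}‖² - ‖∂⁻u^n‖²)/(2Δt)`;
since `û^n = (ū^{n+1} + ū^n)/2` and `∂ū^n = (ū^{n+1} - ū^n)/Δt`, the symmetry of `B` turns the
elastic term into `(B(ū^{n+1}, ū^{n+1}) - B(ū^n, ū^n))/(2Δt)`. Together they form `∂E(u^n)`, and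
the two damping terms are what remains.
-/

section DifferenceQuotients

variable {Z : Type*} [AddCommGroup Z] [Module ℝ Z] (dt : ℝ) (z : ℕ → Z) (n : ℕ)

lemma ddq_eq_smul_bdiff_sub_bdiff :
    ddq dt z n = dt⁻¹ • (bdiff dt z (n + 1) - bdiff dt z n) := by
  simp only [ddq, bdiff, Nat.add_sub_cancel]
  match_scalars <;> ring

lemma cdiff_eq_smul_bdiff_add_bdiff :
    cdiff dt z n = (2 : ℝ)⁻¹ • (bdiff dt z (n + 1) + bdiff dt z n) := by
  simp only [cdiff, bdiff, Nat.add_sub_cancel]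
  match_scalars <;> ring

lemma cdiff_eq_smul_bavg_sub_bavg :
    cdiff dt z n = dt⁻¹ • (bavg z (n + 1) - bavg z n) := by
  simp only [cdiff, bavg, Nat.add_sub_cancel]
  match_scalars <;> ring

lemma cavg_eq_smul_bavg_add_bavg :
    cavg z n = (2 : ℝ)⁻¹ • (bavg z (n + 1) + bavg z n) := by
  simp only [cavg, bavg, Nat.add_sub_cancel]
  match_scalars <;> ring

end DifferenceQuotients

lemma real_inner_sub_add {V : Type*} [NormedAddCommGroup V] [InnerProductSpace ℝ V] (x y : V) :
    ⟪x - y, x + y⟫ = ‖x‖ ^ 2 - ‖y‖ ^ 2 := by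
  simp only [inner_sub_left, inner_add_right, real_inner_self_eq_norm_sq, real_inner_comm x y]
  ring

lemma LinearMap.apply_add_sub_of_symm {V : Type*} [AddCommGroup V] [Module ℝ V]
    (B : V →ₗ[ℝ] V →ₗ[ℝ] ℝ) (hB : ∀ x y, B x y = B y x) (x y : V) :
    B (x + y) (x - y) = B x x - B y y := by
  simp only [map_add, map_sub, LinearMap.add_apply, hB y x]
  ring

lemma inner_ddq_cdiff {V : Type*} [NormedAddCommGroup V] [InnerProductSpace ℝ V]
    (dt : ℝ) (u : ℕ → V) (n : ℕ) :
    ⟪ddq dt u n, cdiff dt u n⟫ = (‖bdiff dt u (n + 1)‖ ^ 2 - ‖bdiff dt u n‖ ^ 2) / (2 * dt) := by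
  rw [ddq_eq_smul_bdiff_sub_bdiff, cdiff_eq_smul_bdiff_add_bdiff, real_inner_smul_left,
    real_inner_smul_right, real_inner_sub_add]
  ring

lemma apply_cavg_cdiff_of_symm {V : Type*} [AddCommGroup V] [Module ℝ V]
    (B : V →ₗ[ℝ] V →ₗ[ℝ] ℝ) (hB : ∀ x y, B x y = B y x) (dt : ℝ) (u : ℕ → V) (n : ℕ) :
    B (cavg u n) (cdiff dt u n)
      = (B (bavg u (n + 1)) (bavg u (n + 1)) - B (bavg u n) (bavg u n)) / (2 * dt) := by
  rw [cavg_eq_smul_bavg_add_bavg, cdiff_eq_smul_bavg_sub_bavg, map_smul, map_smul,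
    LinearMap.smul_apply, smul_eq_mul, smul_eq_mul, B.apply_add_sub_of_symm hB]
  ring

theorem stmt_18_general
    {V : Type*} [NormedAddCommGroup V] [InnerProductSpace ℝ V]
    (B : V →ₗ[ℝ] V →ₗ[ℝ] ℝ) (hBsymm : ∀ x y, B x y = B y x)
    (c D G dt : ℝ)
    (N : ℕ) (u : ℕ → V)
    (hscheme : ∀ n ∈ Finset.Icc 2 (N - 1), ∀ v : V,
      ⟪ddq dt u n, v⟫ + c ^ 2 * B (cavg u n) v + D * ⟪cdiff dt u n, v⟫
        + G * B (cdiff dt u n) v = 0)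
    (E : ℕ → ℝ)
    (hE : ∀ n ∈ Finset.Icc 2 N,
      E n = (1 / 2) * ‖bdiff dt u n‖ ^ 2
        + (1 / 2) * c ^ 2 * B (bavg u n) (bavg u n)) :
    ∀ n ∈ Finset.Icc 2 (N - 1),
      (E (n + 1) - E n) / dt
        = -D * ‖cdiff dt u n‖ ^ 2 - G * B (cdiff dt u n) (cdiff dt u n) := by
  intro n hn
  have htest := hscheme n hn (cdiff dt u n)
  rw [inner_ddq_cdiff, apply_cavg_cdiff_of_symm B hBsymm, real_inner_self_eq_norm_sq] at htest
  rw [mem_Icc] at hn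
  rw [hE (n + 1) (mem_Icc.mpr ⟨by omega, by omega⟩), hE n (mem_Icc.mpr ⟨hn.1, by omega⟩)]
  linear_combination htest

theorem stmt_18
    {V : Type*} [NormedAddCommGroup V] [InnerProductSpace ℝ V]
    (B : V →ₗ[ℝ] V →ₗ[ℝ] ℝ) (hBsymm : ∀ x y, B x y = B y x)
    (c D G dt : ℝ) (hc : 0 < c) (hD : 0 ≤ D) (hG : 0 ≤ G) (hdt : 0 < dt)
    (N : ℕ) (hN : 3 ≤ N) (u : ℕ → V)
    (hscheme : ∀ n ∈ Finset.Icc 2 (N - 1), ∀ v : V,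
      ⟪ddq dt u n, v⟫ + c ^ 2 * B (cavg u n) v + D * ⟪cdiff dt u n, v⟫
        + G * B (cdiff dt u n) v = 0)
    (E : ℕ → ℝ)
    (hE : ∀ n ∈ Finset.Icc 2 N,
      E n = (1 / 2) * ‖bdiff dt u n‖ ^ 2
        + (1 / 2) * c ^ 2 * B (bavg u n) (bavg u n)) :
    ∀ n ∈ Finset.Icc 2 (N - 1),
      (E (n + 1) - E n) / dt
        = -D * ‖cdiff dt u n‖ ^ 2 - G * B (cdiff dt u n) (cdiff dt u n) :=
  stmt_18_general B hBsymm c D G dt N u hscheme E hE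
end
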